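/- arXiv:1308.6005 — 7 statements merged into one kernel-verified Lean document; each statement's English description precedes it below -/
import Mathlib

section
/- If two finite simple graphs have the same chromatic symmetric function, then they have the same number of edges. -/
open SimpleGraph

/- The chromatic symmetric function of `G`, specialized to the `n` variables
`x_0, …, x_{n-1}`: the sum, over all proper colorings `κ : V → Fin n`, of
`∏_{v} x_{κ v}`.  Two graphs have the same chromatic symmetric function iff
these specializations agree for every `n`. -/
open scoped Classical in
noncomputable def csf {V : Type*} [Fintype V] (G : SimpleGraph V) (n : ℕ) :
    MvPolynomial (Fin n) ℤ :=
  ∑ κ : V → Fin n,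
    if ∀ u w, G.Adj u w → κ u ≠ κ w then ∏ v, MvPolynomial.X (κ v) else 0

open Finset

section aux
variable {V : Type*} [Fintype V]

noncomputable def wt {n : ℕ} (κ : V → Fin n) : Fin n →₀ ℕ := ∑ v, Finsupp.single (κ v) 1

open scoped Classical in
lemma prod_X_eq_monomial {n : ℕ} (κ : V → Fin n) :
    (∏ v, (MvPolynomial.X (κ v) : MvPolynomial (Fin n) ℤ)) = MvPolynomial.monomial (wt κ) 1 := by
  classical
  rw [wt]
  induction (Finset.univ : Finset V) using Finset.cons_induction with
  | empty => simp
  | cons a s ha ih =>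
      rw [Finset.prod_cons, Finset.sum_cons, ih, MvPolynomial.X,
        MvPolynomial.monomial_mul, one_mul]

open scoped Classical in
lemma coeff_csf (G : SimpleGraph V) (n : ℕ) (d : Fin n →₀ ℕ) :
    (csf G n).coeff d =
      ((Finset.univ : Finset (V → Fin n)).filter
        (fun κ => (∀ u w, G.Adj u w → κ u ≠ κ w) ∧ wt κ = d)).card := by
  classical
  rw [csf, MvPolynomial.coeff_sum, Finset.card_filter]
  push_cast
  refine Finset.sum_congr rfl fun κ _ => ?_
  rw [prod_X_eq_monomial]
  split_ifs with h1 h2 h2 <;> simp_all [MvPolynomial.coeff_monomial]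

lemma wt_degree {n : ℕ} (κ : V → Fin n) : (wt κ).degree = Fintype.card V := by
  rw [Finsupp.degree_eq_weight_one, wt, map_sum]
  simp [Finsupp.weight_apply]

open scoped Classical in
lemma csf_homog (G : SimpleGraph V) (n : ℕ) :
    (csf G n).IsHomogeneous (Fintype.card V) := by
  classical
  rw [csf]
  apply MvPolynomial.IsHomogeneous.sum
  intro κ _
  split_ifs
  · rw [prod_X_eq_monomial]
    exact MvPolynomial.isHomogeneous_monomial _ (wt_degree κ)
  · exact MvPolynomial.isHomogeneous_zero _ _ _

lemma csf_ne_zero (G : SimpleGraph V) (n : ℕ) (hn : Fintype.card V ≤ n) :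
    csf G n ≠ 0 := by
  classical
  intro h0
  set κ₀ : V → Fin n := fun v => Fin.castLE hn ((Fintype.equivFin V) v) with hκ
  have hinj : Function.Injective κ₀ := by
    intro a b hab
    exact (Fintype.equivFin V).injective (Fin.castLE_injective hn hab)
  have hc := coeff_csf G n (wt κ₀)
  rw [h0, MvPolynomial.coeff_zero] at hc
  have : κ₀ ∈ (Finset.univ : Finset (V → Fin n)).filter
      (fun κ => (∀ u w, G.Adj u w → κ u ≠ κ w) ∧ wt κ = wt κ₀) := by
    refine Finset.mem_filter.mpr ⟨Finset.mem_univ _, fun u w hadj heq => hadj.ne (hinj heq), rfl⟩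
  have hcc : ((Finset.univ : Finset (V → Fin n)).filter
      (fun κ => (∀ u w, G.Adj u w → κ u ≠ κ w) ∧ wt κ = wt κ₀)).card = 0 := by
    exact_mod_cast hc.symm
  rw [Finset.card_eq_zero] at hcc
  rw [hcc] at this
  exact absurd this (Finset.notMem_empty _)

noncomputable def patt (n : ℕ) [NeZero n] : Fin n →₀ ℕ :=
  Finsupp.single 0 1 + ∑ i, Finsupp.single i 1

lemma patt_apply {n : ℕ} [NeZero n] (i : Fin n) :
    patt n i = if i = 0 then 2 else 1 := by
  classical
  rw [patt, Finsupp.add_apply, Finsupp.finset_sum_apply]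
  simp [Finsupp.single_apply, Finset.sum_ite_eq]
  split_ifs with h1 h2 h2 <;> first | rfl | (exfalso; simp_all [eq_comm])

lemma wt_apply {n : ℕ} (κ : V → Fin n) (i : Fin n) [DecidableEq V] :
    wt κ i = (univ.filter (fun v => κ v = i)).card := by
  classical
  rw [wt, Finsupp.finset_sum_apply, Finset.card_filter]
  simp [Finsupp.single_apply]

noncomputable def gmap [DecidableEq V] {n : ℕ} [NeZero n] (u w : V)
    (e : {v : V // ¬(v = u ∨ v = w)} ≃ {i : Fin n // ¬ i = 0}) : V → Fin n :=
  fun v => if h : v = u ∨ v = w then 0 else (e ⟨v, h⟩).1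

open scoped Classical in
lemma inner_count {n : ℕ} [NeZero n] (hc : Fintype.card V = n + 1)
    {u w : V} (huw : u ≠ w) :
    ((univ : Finset (V → Fin n)).filter
      (fun κ => wt κ = patt n ∧ κ u = 0 ∧ κ w = 0)).card = Nat.factorial (n - 1) := by
  classical
  have cardA : Fintype.card {v : V // ¬(v = u ∨ v = w)} = n - 1 := by
    rw [Fintype.card_subtype_compl]
    have h2 : Fintype.card {v : V // v = u ∨ v = w} = 2 := by
      rw [Fintype.card_subtype]
      have : (univ.filter (fun v : V => v = u ∨ v = w)) = {u, w} := by
        ext v; simp [Finset.mem_insert]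
      rw [this, Finset.card_insert_of_notMem (by simpa using huw), Finset.card_singleton]
    rw [h2, hc]; omega
  have cardB : Fintype.card {i : Fin n // ¬ i = 0} = n - 1 := by
    rw [Fintype.card_subtype_compl, Fintype.card_subtype_eq, Fintype.card_fin]
  have hg0 : ∀ (e : {v : V // ¬(v = u ∨ v = w)} ≃ {i : Fin n // ¬ i = 0}) (v : V),
      gmap u w e v = 0 ↔ (v = u ∨ v = w) := by
    intro e v
    unfold gmap
    split_ifs with h
    · simp [h]
    · simpa [h] using (e ⟨v, h⟩).2
  have key : ((univ : Finset ({v : V // ¬(v = u ∨ v = w)} ≃ {i : Fin n // ¬ i = 0}))).card =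
      ((univ : Finset (V → Fin n)).filter
        (fun κ => wt κ = patt n ∧ κ u = 0 ∧ κ w = 0)).card := by
    apply Finset.card_bij (fun e _ => gmap u w e)
    · -- maps into the filter
      intro e _
      rw [Finset.mem_filter]
      refine ⟨Finset.mem_univ _, ?_, ?_, ?_⟩
      · ext i
        rw [wt_apply, patt_apply]
        split_ifs with hi
        · subst hi
          have : (univ.filter (fun v => gmap u w e v = 0)) = {u, w} := by
            ext v; simp [hg0 e v]
          rw [this, Finset.card_insert_of_notMem (by simpa using huw),
            Finset.card_singleton]
        · have : (univ.filter (fun v => gmap u w e v = i)) = {(e.symm ⟨i, hi⟩).1} := by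
            ext v
            simp only [Finset.mem_filter, Finset.mem_univ, true_and, Finset.mem_singleton]
            unfold gmap
            split_ifs with h
            · constructor
              · intro h0; exact absurd h0.symm hi
              · rintro rfl
                exact absurd h (e.symm ⟨i, hi⟩).2
            · rw [show ((e ⟨v, h⟩).1 = i) ↔ (e ⟨v, h⟩ = ⟨i, hi⟩) from
                ⟨fun hh => Subtype.ext hh, fun hh => congrArg Subtype.val hh⟩,
                Equiv.apply_eq_iff_eq_symm_apply]
              exact ⟨fun hh => congrArg Subtype.val hh, fun hh => Subtype.ext hh⟩
          rw [this, Finset.card_singleton]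
      · unfold gmap; simp
      · unfold gmap; simp
    · -- injective
      intro e₁ _ e₂ _ hee
      refine Equiv.ext fun a => Subtype.ext ?_
      have h3 := congrFun hee a.1
      unfold gmap at h3
      simp only [a.2, dif_neg] at h3
      exact h3
    · -- surjective
      intro κ hκ
      rw [Finset.mem_filter] at hκ
      obtain ⟨-, hwt, hu, hw⟩ := hκ
      have fib0 : (univ.filter (fun v => κ v = 0)) = {u, w} := by
        have hsub : ({u, w} : Finset V) ⊆ univ.filter (fun v => κ v = 0) := by
          intro v hv
          simp only [Finset.mem_insert, Finset.mem_singleton] at hv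
          rcases hv with rfl | rfl <;> simp [hu, hw]
        have hcard : (univ.filter (fun v => κ v = 0)).card ≤ ({u, w} : Finset V).card := by
          rw [← wt_apply κ 0, hwt, patt_apply,
            Finset.card_insert_of_notMem (by simpa using huw), Finset.card_singleton]
          simp
        exact (Finset.eq_of_subset_of_card_le hsub hcard).symm
      have hne0 : ∀ v : V, ¬(v = u ∨ v = w) → ¬ κ v = 0 := by
        intro v hv h0
        have : v ∈ univ.filter (fun x => κ x = 0) := by simp [h0]
        rw [fib0] at this
        simp only [Finset.mem_insert, Finset.mem_singleton] at this
        exact hv this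
      have hinj : ∀ a b : V, κ a = κ b → ¬ κ a = 0 → a = b := by
        intro a b hab h0
        have hcard1 : (univ.filter (fun v => κ v = κ a)).card ≤ 1 := by
          rw [← wt_apply, hwt, patt_apply, if_neg h0]
        exact Finset.card_le_one.mp hcard1 a (by simp) b (by simp [hab])
      have finj : Function.Injective
          (fun a : {v : V // ¬(v = u ∨ v = w)} => (⟨κ a.1, hne0 a.1 a.2⟩ : {i : Fin n // ¬ i = 0})) := by
        intro a b hab
        exact Subtype.ext (hinj a.1 b.1 (congrArg Subtype.val hab) (hne0 a.1 a.2))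
      have fbij : Function.Bijective
          (fun a : {v : V // ¬(v = u ∨ v = w)} => (⟨κ a.1, hne0 a.1 a.2⟩ : {i : Fin n // ¬ i = 0})) :=
        (Fintype.bijective_iff_injective_and_card _).mpr ⟨finj, cardA.trans cardB.symm⟩
      refine ⟨Equiv.ofBijective _ fbij, Finset.mem_univ _, ?_⟩
      funext v
      unfold gmap
      split_ifs with h
      · rcases h with rfl | rfl <;> simp [hu, hw]
      · rfl
  rw [← key, Finset.card_univ,
    Fintype.card_equiv (Fintype.equivOfCardEq (cardA.trans cardB.symm)), cardA]

open scoped Classical in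
lemma count_S (G : SimpleGraph V) {n : ℕ} [NeZero n] (hc : Fintype.card V = n + 1) :
    ((univ : Finset (V → Fin n)).filter
      (fun κ => (∀ u w, G.Adj u w → κ u ≠ κ w) ∧ wt κ = patt n)).card
      = Gᶜ.edgeFinset.card * Nat.factorial (n - 1) := by
  classical
  set S := (univ : Finset (V → Fin n)).filter
      (fun κ => (∀ u w, G.Adj u w → κ u ≠ κ w) ∧ wt κ = patt n) with hS
  have fib2 : ∀ κ ∈ S, (univ.filter (fun v => κ v = 0)).card = 2 := by
    intro κ hκ
    rw [hS, Finset.mem_filter] at hκ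
    rw [← wt_apply, hκ.2.2, patt_apply, if_pos rfl]
  have step1 : ∑ p ∈ (univ : Finset V).offDiag,
      (S.filter (fun κ => κ p.1 = 0 ∧ κ p.2 = 0)).card = 2 * S.card := by
    calc ∑ p ∈ (univ : Finset V).offDiag,
          (S.filter (fun κ => κ p.1 = 0 ∧ κ p.2 = 0)).card
        = ∑ p ∈ (univ : Finset V).offDiag, ∑ κ ∈ S,
            (if κ p.1 = 0 ∧ κ p.2 = 0 then 1 else 0) := by
          simp_rw [Finset.card_filter]
      _ = ∑ κ ∈ S, ∑ p ∈ (univ : Finset V).offDiag,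
            (if κ p.1 = 0 ∧ κ p.2 = 0 then 1 else 0) := Finset.sum_comm
      _ = ∑ κ ∈ S, ((univ : Finset V).offDiag.filter
            (fun p => κ p.1 = 0 ∧ κ p.2 = 0)).card := by
          simp_rw [Finset.card_filter]
      _ = ∑ _κ ∈ S, 2 := by
          refine Finset.sum_congr rfl fun κ hκ => ?_
          have hfe : (univ : Finset V).offDiag.filter
              (fun p => κ p.1 = 0 ∧ κ p.2 = 0)
              = (univ.filter (fun v => κ v = 0)).offDiag := by
            ext p
            simp only [Finset.mem_filter, Finset.mem_offDiag, Finset.mem_univ, true_and]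
            tauto
          rw [hfe, Finset.offDiag_card, fib2 κ hκ]
      _ = 2 * S.card := by rw [Finset.sum_const, smul_eq_mul, mul_comm]
  have step2 : ∀ p ∈ (univ : Finset V).offDiag,
      (S.filter (fun κ => κ p.1 = 0 ∧ κ p.2 = 0)).card
        = if G.Adj p.1 p.2 then 0 else Nat.factorial (n - 1) := by
    rintro ⟨u, w⟩ hp
    rw [Finset.mem_offDiag] at hp
    have huw : u ≠ w := hp.2.2
    by_cases hadj : G.Adj u w
    · rw [if_pos hadj, Finset.card_eq_zero, Finset.eq_empty_iff_forall_notMem]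
      intro κ hκ
      rw [Finset.mem_filter, hS, Finset.mem_filter] at hκ
      exact hκ.1.2.1 u w hadj (hκ.2.1.trans hκ.2.2.symm)
    · rw [if_neg hadj, ← inner_count hc huw]
      congr 1
      ext κ
      simp only [hS, Finset.mem_filter, Finset.mem_univ, true_and]
      constructor
      · rintro ⟨⟨-, hwt⟩, hu, hw⟩; exact ⟨hwt, hu, hw⟩
      · rintro ⟨hwt, hu, hw⟩
        refine ⟨⟨?_, hwt⟩, hu, hw⟩
        -- properness is implied
        intro a b hab hclr
        have hfib0 : (univ.filter (fun v => κ v = 0)) = {u, w} := by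
          have hsub : ({u, w} : Finset V) ⊆ univ.filter (fun v => κ v = 0) := by
            intro v hv
            simp only [Finset.mem_insert, Finset.mem_singleton] at hv
            rcases hv with rfl | rfl <;> simp [hu, hw]
          have hcard : (univ.filter (fun v => κ v = 0)).card
              ≤ ({u, w} : Finset V).card := by
            rw [← wt_apply κ 0, hwt, patt_apply, if_pos rfl,
              Finset.card_insert_of_notMem (by simpa using huw), Finset.card_singleton]
          exact (Finset.eq_of_subset_of_card_le hsub hcard).symm
        by_cases h0 : κ a = 0
        · have ha : a ∈ ({u, w} : Finset V) := by
            rw [← hfib0]; simp [h0]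
          have hb : b ∈ ({u, w} : Finset V) := by
            rw [← hfib0]; simp [← hclr, h0]
          simp only [Finset.mem_insert, Finset.mem_singleton] at ha hb
          have hne := hab.ne
          rcases ha with rfl | rfl <;> rcases hb with rfl | rfl
          · exact hne rfl
          · exact hadj hab
          · exact hadj hab.symm
          · exact hne rfl
        · have hcard1 : (univ.filter (fun v => κ v = κ a)).card ≤ 1 := by
            rw [← wt_apply, hwt, patt_apply, if_neg h0]
          exact hab.ne (Finset.card_le_one.mp hcard1 a (by simp) b (by simp [hclr]))
  have step3 : 2 * S.card
      = ((univ : Finset (V × V)).filter (fun p => Gᶜ.Adj p.1 p.2)).card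
        * Nat.factorial (n - 1) := by
    rw [← step1, Finset.sum_congr rfl step2]
    have hpairs : (univ : Finset V).offDiag.filter (fun p => ¬ G.Adj p.1 p.2)
        = (univ : Finset (V × V)).filter (fun p => Gᶜ.Adj p.1 p.2) := by
      ext p
      simp only [Finset.mem_filter, Finset.mem_offDiag, Finset.mem_univ, true_and,
        compl_adj]
      try tauto
    have hsum : (∑ p ∈ (univ : Finset V).offDiag,
          if G.Adj p.1 p.2 then 0 else Nat.factorial (n - 1))
        = ∑ _p ∈ (univ : Finset V).offDiag.filter (fun p => ¬ G.Adj p.1 p.2),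
            Nat.factorial (n - 1) := by
      rw [Finset.sum_filter]
      exact Finset.sum_congr rfl fun p _ => by by_cases hx : G.Adj p.1 p.2 <;> simp [hx]
    rw [hsum, Finset.sum_const, smul_eq_mul, hpairs]
  have twomul : 2 * Gᶜ.edgeFinset.card
      = ((univ : Finset (V × V)).filter (fun p => Gᶜ.Adj p.1 p.2)).card := by
    rw [two_mul_card_edgeFinset]
  have : 2 * S.card = 2 * (Gᶜ.edgeFinset.card * Nat.factorial (n - 1)) := by
    rw [step3, ← twomul, mul_assoc]
  exact Nat.eq_of_mul_eq_mul_left (by norm_num) this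
end aux

/-- If two finite simple graphs have the same chromatic symmetric function, then they
have the same number of edges. -/
theorem card_edges_eq_of_csf_eq {V W : Type*} [Fintype V] [Fintype W]
    (G : SimpleGraph V) (H : SimpleGraph W) (h : ∀ n, csf G n = csf H n) :
    G.edgeSet.ncard = H.edgeSet.ncard := by
  classical
  have hcard : Fintype.card V = Fintype.card W := by
    set N := Fintype.card V + Fintype.card W with hN
    refine MvPolynomial.IsHomogeneous.inj_right (csf_homog G N)
      (h N ▸ csf_homog H N) (csf_ne_zero G N (by omega))
  have hEG : G.edgeSet.ncard = G.edgeFinset.card := by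
    rw [← coe_edgeFinset, Set.ncard_coe_finset]
  have hEH : H.edgeSet.ncard = H.edgeFinset.card := by
    rw [← coe_edgeFinset, Set.ncard_coe_finset]
  by_cases h2 : 2 ≤ Fintype.card V
  · obtain ⟨n, hn⟩ : ∃ n, Fintype.card V = n + 1 := ⟨Fintype.card V - 1, by omega⟩
    haveI : NeZero n := ⟨by omega⟩
    have hn' : Fintype.card W = n + 1 := by rw [← hcard]; exact hn
    have hG := count_S G hn
    have hH := count_S H hn'
    have hco := congrArg (MvPolynomial.coeff (patt n)) (h n)
    rw [coeff_csf, coeff_csf] at hco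
    have hSS : ((Finset.univ : Finset (V → Fin n)).filter
        (fun κ => (∀ u w, G.Adj u w → κ u ≠ κ w) ∧ wt κ = patt n)).card
        = ((Finset.univ : Finset (W → Fin n)).filter
        (fun κ => (∀ u w, H.Adj u w → κ u ≠ κ w) ∧ wt κ = patt n)).card := by
      exact_mod_cast hco
    rw [hG, hH] at hSS
    have hcompl : Gᶜ.edgeFinset.card = Hᶜ.edgeFinset.card :=
      Nat.eq_of_mul_eq_mul_right (Nat.factorial_pos _) hSS
    have cG : Gᶜ.edgeSet.ncard = Gᶜ.edgeFinset.card := by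
      rw [← coe_edgeFinset, Set.ncard_coe_finset]
    have cH : Hᶜ.edgeSet.ncard = Hᶜ.edgeFinset.card := by
      rw [← coe_edgeFinset, Set.ncard_coe_finset]
    have cTV : (⊤ : SimpleGraph V).edgeSet.ncard = (Fintype.card V).choose 2 := by
      rw [← coe_edgeFinset, Set.ncard_coe_finset, card_edgeFinset_top_eq_card_choose_two]
    have cTW : (⊤ : SimpleGraph W).edgeSet.ncard = (Fintype.card W).choose 2 := by
      rw [← coe_edgeFinset, Set.ncard_coe_finset, card_edgeFinset_top_eq_card_choose_two]
    have hGtop : G.edgeSet.ncard + Gᶜ.edgeSet.ncard = (Fintype.card V).choose 2 := by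
      rw [← cTV, ← Set.ncard_union_eq (disjoint_edgeSet.mpr disjoint_compl_right)
        (Set.toFinite _) (Set.toFinite _), ← edgeSet_sup, sup_compl_eq_top]
    have hHtop : H.edgeSet.ncard + Hᶜ.edgeSet.ncard = (Fintype.card W).choose 2 := by
      rw [← cTW, ← Set.ncard_union_eq (disjoint_edgeSet.mpr disjoint_compl_right)
        (Set.toFinite _) (Set.toFinite _), ← edgeSet_sup, sup_compl_eq_top]
    rw [hcard] at hGtop
    have hcompl' : Gᶜ.edgeSet.ncard = Hᶜ.edgeSet.ncard := by rw [cG, cH, hcompl]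
    clear hco hSS hG hH h cG cH cTV cTW hcompl hEG hEH
    omega
  · have hGe : G.edgeSet = ∅ := by
      ext e
      induction e using Sym2.ind with
      | _ a b =>
        simp only [mem_edgeSet, Set.mem_empty_iff_false, iff_false]
        intro hadj
        exact h2 (Fintype.one_lt_card_iff_nontrivial.mpr ⟨a, b, hadj.ne⟩)
    have hHe : H.edgeSet = ∅ := by
      ext e
      induction e using Sym2.ind with
      | _ a b =>
        simp only [mem_edgeSet, Set.mem_empty_iff_false, iff_false]
        intro hadj
        have : 2 ≤ Fintype.card W := Fintype.one_lt_card_iff_nontrivial.mpr ⟨a, b, hadj.ne⟩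
        omega
    simp [hGe, hHe]
end

section
/- Let G be a finite simple graph containing edges e₁, e₂, e₃ forming a triangle. Let G_{2,3} = G with e₁ deleted, G_{1,3} = G with e₂ deleted, and G₃ = G with both e₁ and e₂ deleted. Then X_G = X_{G_{2,3}} + X_{G_{1,3}} − X_{G₃}. -/
open SimpleGraph

/-!
Compare the four graphs colouring by colouring. Writing `H = G - e₁ - e₂`, a colouring is proper
for `G - e₁`, `G - e₂`, `G` iff it is proper for `H` and, respectively, separates the ends of
`e₂`, of `e₁`, of both. A colouring proper for `H` separates `a` and `c`, since `e₃` survives in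
`H`, so it cannot fail to separate both `a, b` and `b, c`. Hence, with `A` and `B` these two
separation conditions, the indicator identity `[A ∧ B] + 1 = [A] + [B]` holds on proper
colourings of `H`, which is the decomposition summand by summand.
-/

theorem ite_and_add_ite_eq_of_imp_or {R : Type*} [AddMonoid R] {H A B : Prop}
    [Decidable H] [Decidable A] [Decidable B]
    (h : H → A ∨ B) (x : R) :
    (if H ∧ A ∧ B then x else 0) + (if H then x else 0) =
      (if H ∧ A then x else 0) + (if H ∧ B then x else 0) := by
  by_cases hH : H <;> by_cases hA : A <;> by_cases hB : B <;> simp_all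

namespace SimpleGraph

variable {V α : Type*} (G : SimpleGraph V)

def IsProperColoring (κ : V → α) : Prop := ∀ u w, G.Adj u w → κ u ≠ κ w

variable {G}

theorem IsProperColoring.mono_left {G' : SimpleGraph V} {κ : V → α} (hle : G' ≤ G)
    (h : G.IsProperColoring κ) : G'.IsProperColoring κ :=
  fun u w huw => h u w (hle huw)

theorem isProperColoring_iff_deleteEdges_singleton {κ : V → α} {u v : V} (huv : G.Adj u v) :
    G.IsProperColoring κ ↔ (G.deleteEdges {s(u, v)}).IsProperColoring κ ∧ κ u ≠ κ v := by
  refine ⟨fun h => ⟨h.mono_left (G.deleteEdges_le _), h u v huv⟩, fun ⟨h, hκ⟩ x y hxy => ?_⟩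
  by_cases hxy_uv : s(x, y) = s(u, v)
  · rcases Sym2.eq_iff.1 hxy_uv with ⟨rfl, rfl⟩ | ⟨rfl, rfl⟩
    exacts [hκ, hκ.symm]
  · exact h x y (deleteEdges_adj.2 ⟨hxy, hxy_uv⟩)

theorem deleteEdges_pair (e f : Sym2 V) :
    G.deleteEdges {e, f} = (G.deleteEdges {e}).deleteEdges {f} := by
  rw [deleteEdges_deleteEdges, Set.singleton_union]

theorem deleteEdges_pair' (e f : Sym2 V) :
    G.deleteEdges {e, f} = (G.deleteEdges {f}).deleteEdges {e} := by
  rw [Set.pair_comm, deleteEdges_pair]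

end SimpleGraph

open scoped Classical in
theorem csf_eq_sum_isProperColoring {V : Type*} [Fintype V] (G : SimpleGraph V) (n : ℕ) :
    csf G n = ∑ κ : V → Fin n,
      if G.IsProperColoring κ then ∏ v, MvPolynomial.X (κ v) else 0 :=
  Finset.sum_congr rfl fun _ _ => if_congr Iff.rfl rfl rfl

/-- Triangle decomposition: if `e₁ = s(a,b)`, `e₂ = s(b,c)`, `e₃ = s(a,c)` form a
triangle of `G`, then `X_G = X_{G - e₁} + X_{G - e₂} - X_{G - e₁ - e₂}`. -/
theorem csf_triangle_decomposition {V : Type*} [Fintype V] (G : SimpleGraph V)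
    (a b c : V) (hab : G.Adj a b) (hbc : G.Adj b c) (hac : G.Adj a c) :
    ∀ n, csf G n =
      csf (G.deleteEdges {s(a, b)}) n + csf (G.deleteEdges {s(b, c)}) n -
        csf (G.deleteEdges {s(a, b), s(b, c)}) n := by
  intro n
  have hbc₁ : (G.deleteEdges {s(a, b)}).Adj b c :=
    deleteEdges_adj.2 ⟨hbc, by grind [Sym2.eq_iff, hac.ne]⟩
  have hab₂ : (G.deleteEdges {s(b, c)}).Adj a b :=
    deleteEdges_adj.2 ⟨hab, by grind [Sym2.eq_iff, hac.ne]⟩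
  have hac₁₂ : (G.deleteEdges {s(a, b), s(b, c)}).Adj a c :=
    deleteEdges_adj.2 ⟨hac, by grind [Sym2.eq_iff, hab.ne, hbc.ne]⟩
  suffices csf G n + csf (G.deleteEdges {s(a, b), s(b, c)}) n =
      csf (G.deleteEdges {s(b, c)}) n + csf (G.deleteEdges {s(a, b)}) n by
    linear_combination this
  simp only [csf_eq_sum_isProperColoring, ← Finset.sum_add_distrib]
  refine Finset.sum_congr rfl fun κ _ => ?_
  rw [isProperColoring_iff_deleteEdges_singleton hbc,
    isProperColoring_iff_deleteEdges_singleton hab₂,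
    isProperColoring_iff_deleteEdges_singleton hbc₁,
    ← deleteEdges_pair' (s(a, b)), ← deleteEdges_pair, and_assoc]
  have separates : (G.deleteEdges {s(a, b), s(b, c)}).IsProperColoring κ → κ a ≠ κ b ∨ κ b ≠ κ c :=
    fun hκ => not_and_or.1 fun ⟨hκab, hκbc⟩ => hκ a c hac₁₂ (hκab.trans hκbc)
  classical
  convert ite_and_add_ite_eq_of_imp_or separates (∏ v, MvPolynomial.X (κ v))
end

section
/- Let G be a finite simple graph with adjacent edges e₁ = v v₁ and e₂ = v v₂ such that e₃ = v₁v₂ is not an edge of G. Let G_{2,3} be the graph obtained from G by removing e₁ and adding e₃, let G₁ be G with e₂ removed, and let G₃ be G with e₁ and e₂ removed and e₃ added. Then X_G = X_{G_{2,3}} + X_{G₁} − X_{G₃}. -/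
open SimpleGraph

/- Fix a colouring `κ` that is proper on `H = G - e₁ - e₂`. It is proper on `G`, `G_{2,3}`, `G₁`,
`G₃` exactly when, respectively, `κ v ∉ {κ v₁, κ v₂}`, `κ v₂ ∉ {κ v, κ v₁}`, `κ v ≠ κ v₁`,
`κ v₁ ≠ κ v₂`. The identity then holds colouring by colouring: if `κ v₁ = κ v₂` both sides reduce
to `[κ v ≠ κ v₁]`, and otherwise `κ v` differs from at least one of `κ v₁`, `κ v₂`. -/

namespace SimpleGraph

variable {V : Type*} {G K : SimpleGraph V} {a b : V}

lemma deleteEdges_sup_edge_of_adj (h : G.Adj a b) : G.deleteEdges {s(a, b)} ⊔ edge a b = G :=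
  sdiff_sup_cancel ((edge_le_iff _).2 (.inr h))

lemma sup_edge_le_iff (hab : a ≠ b) : G ⊔ edge a b ≤ K ↔ G ≤ K ∧ K.Adj a b := by
  rw [sup_le_iff, edge_le_iff, or_iff_right hab]

lemma le_iff_deleteEdges_le_and_adj (h : G.Adj a b) :
    G ≤ K ↔ G.deleteEdges {s(a, b)} ≤ K ∧ K.Adj a b := by
  conv_lhs => rw [← deleteEdges_sup_edge_of_adj h]
  exact sup_edge_le_iff h.ne

lemma deleteEdges_le_iff_of_adj_of_ne {e : Sym2 V} (h : G.Adj a b) (hne : s(a, b) ≠ e) :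
    G.deleteEdges {e} ≤ K ↔ G.deleteEdges {s(a, b), e} ≤ K ∧ K.Adj a b := by
  rw [le_iff_deleteEdges_le_and_adj (deleteEdges_adj.2 ⟨h, hne⟩), deleteEdges_deleteEdges,
    Set.union_singleton]

end SimpleGraph

-- `G ≤ (⊤ : SimpleGraph α).comap κ` says exactly that `κ` is a proper colouring of `G`.
open scoped Classical in
lemma csf_eq_sum_ite_le_comap_top {V : Type*} [Fintype V] (G : SimpleGraph V) (n : ℕ) :
    csf G n = ∑ κ : V → Fin n,
      if G ≤ (⊤ : SimpleGraph (Fin n)).comap κ then ∏ v, MvPolynomial.X (κ v) else 0 :=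
  Finset.sum_congr rfl fun _ _ => if_congr Iff.rfl rfl rfl

lemma ite_ne_and_ne_eq {α R : Type*} [DecidableEq α] [AddCommGroup R] (P : Prop) [Decidable P]
    (x y z : α) (t : R) :
    (if (P ∧ x ≠ y) ∧ x ≠ z then t else 0) =
      (if (P ∧ x ≠ z) ∧ y ≠ z then t else 0) + (if P ∧ x ≠ y then t else 0) -
        (if P ∧ y ≠ z then t else 0) := by
  by_cases P <;> by_cases x = y <;> by_cases x = z <;> by_cases y = z <;> simp_all

theorem csf_line_erase_general {V : Type*} [Fintype V] (G : SimpleGraph V)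
    (v v₁ v₂ : V) (h₁ : G.Adj v v₁) (h₂ : G.Adj v v₂) (hne : v₁ ≠ v₂) :
    ∀ n, csf G n =
      csf ((G.deleteEdges {s(v, v₁)}) ⊔ fromEdgeSet {s(v₁, v₂)}) n +
        csf (G.deleteEdges {s(v, v₂)}) n -
        csf ((G.deleteEdges {s(v, v₁), s(v, v₂)}) ⊔ fromEdgeSet {s(v₁, v₂)}) n := by
  classical
  intro n
  simp only [csf_eq_sum_ite_le_comap_top, ← Finset.sum_add_distrib, ← Finset.sum_sub_distrib]
  refine Finset.sum_congr rfl fun κ _ => ?_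
  set K := (⊤ : SimpleGraph (Fin n)).comap κ
  have he : s(v, v₁) ≠ s(v, v₂) := mt Sym2.congr_right.1 hne
  have hG₁ := deleteEdges_le_iff_of_adj_of_ne (K := K) h₁ he
  have hG₂ := deleteEdges_le_iff_of_adj_of_ne (K := K) h₂ he.symm
  rw [Set.pair_comm] at hG₂
  have hG := le_iff_deleteEdges_le_and_adj (K := K) h₂
  have hedge : fromEdgeSet {s(v₁, v₂)} = edge v₁ v₂ := rfl
  simp only [hedge, sup_edge_le_iff hne, hG, hG₁, hG₂]
  exact ite_ne_and_ne_eq _ (κ v) (κ v₁) (κ v₂) _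

/-- Let `e₁ = v v₁` and `e₂ = v v₂` be adjacent edges of `G` with `e₃ = v₁ v₂` not an
edge of `G`.  With `G_{2,3}` obtained from `G` by removing `e₁` and adding `e₃`,
`G₁ = G - e₂`, and `G₃` obtained by removing `e₁, e₂` and adding `e₃`, we have
`X_G = X_{G_{2,3}} + X_{G₁} - X_{G₃}`. -/
theorem csf_line_erase {V : Type*} [Fintype V] (G : SimpleGraph V)
    (v v₁ v₂ : V) (h₁ : G.Adj v v₁) (h₂ : G.Adj v v₂) (hne : v₁ ≠ v₂)
    (h₃ : ¬ G.Adj v₁ v₂) :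
    ∀ n, csf G n =
      csf ((G.deleteEdges {s(v, v₁)}) ⊔ fromEdgeSet {s(v₁, v₂)}) n +
        csf (G.deleteEdges {s(v, v₂)}) n -
        csf ((G.deleteEdges {s(v, v₁), s(v, v₂)}) ⊔ fromEdgeSet {s(v₁, v₂)}) n :=
  csf_line_erase_general G v v₁ v₂ h₁ h₂ hne
end

section
/- Let G be a finite simple graph containing a triangle formed by edges e₁ = v v₁, e₂ = v v₂, e₃ = v₁v₂. Let G_{1,2} = G with e₃ removed, G₁ = G with e₂ and e₃ removed, G₂ = G with e₁ and e₃ removed, and G₃ = G with e₁ and e₂ removed. Then X_G = 2·X_{G_{1,2}} + X_{G₃} − X_{G₁} − X_{G₂}. -/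
/-!
Let `H` be `G` with all three triangle edges deleted. A coloring is proper for each of the five
graphs iff it is proper for `H` and separates the endpoints of the triangle edges that graph
keeps, so the identity reduces, coloring by coloring, to one between indicators of
`x ≠ y`, `x ≠ z`, `y ≠ z` for the colors `x, y, z` of `v, v₁, v₂`. Since equality is transitive,
no coloring violates exactly two of these three conditions, and on the remaining five patterns
`[x≠y ∧ x≠z ∧ y≠z] = 2 [x≠y ∧ x≠z] + [y≠z] - [x≠y] - [x≠z]` is checked directly.
-/

open SimpleGraph

namespace SimpleGraph

variable {V α : Type*} (G : SimpleGraph V)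

theorem forall_adj_ne_iff_forall_edgeSet (κ : V → α) :
    (∀ u w, G.Adj u w → κ u ≠ κ w) ↔ ∀ e ∈ G.edgeSet, ¬(e.map κ).IsDiag := by
  simp [Sym2.forall]

theorem forall_deleteEdges_adj_ne_iff {r s : Set (Sym2 V)} (hr : r ⊆ G.edgeSet)
    (hrs : Disjoint r s) (κ : V → α) :
    (∀ u w, (G.deleteEdges s).Adj u w → κ u ≠ κ w) ↔
      (∀ u w, (G.deleteEdges (r ∪ s)).Adj u w → κ u ≠ κ w) ∧
        ∀ e ∈ r, ¬(e.map κ).IsDiag := by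
  have hsplit : G.edgeSet \ s = G.edgeSet \ (r ∪ s) ∪ r := by
    rw [Set.union_comm r s, ← Set.sdiff_sdiff,
      Set.sdiff_union_of_subset (Set.subset_sdiff.2 ⟨hr, hrs⟩)]
  simp only [forall_adj_ne_iff_forall_edgeSet, edgeSet_deleteEdges, hsplit, Set.mem_union,
    or_imp, forall_and]

end SimpleGraph

theorem ite_pairwise_ne_eq {α R : Type*} [DecidableEq α] [CommRing R] (x y z : α) :
    (if x ≠ y ∧ x ≠ z ∧ y ≠ z then 1 else 0 : R) =
      2 * (if x ≠ y ∧ x ≠ z then 1 else 0) + (if y ≠ z then 1 else 0) -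
        (if x ≠ y then 1 else 0) - (if x ≠ z then 1 else 0) := by
  by_cases hxy : x = y <;> by_cases hxz : x = z <;> by_cases hyz : y = z <;> simp_all <;> ring

open scoped Classical in
theorem csf_deleteEdges_eq_sum {V : Type*} [Fintype V] (G : SimpleGraph V)
    {r s t : Set (Sym2 V)} (ht : t ⊆ G.edgeSet) (hrs : Disjoint r s) (hrst : r ∪ s = t)
    (n : ℕ) :
    csf (G.deleteEdges s) n = ∑ κ : V → Fin n,
      (if ∀ e ∈ r, ¬(e.map κ).IsDiag then 1 else 0) *
        if ∀ u w, (G.deleteEdges t).Adj u w → κ u ≠ κ w then ∏ v, MvPolynomial.X (κ v) else 0 := by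
  have hr : r ⊆ G.edgeSet := Set.subset_union_left.trans (hrst.le.trans ht)
  simp only [csf, ite_zero_mul_ite_zero, one_mul, G.forall_deleteEdges_adj_ne_iff hr hrs, hrst,
    and_comm]

/-- Let `e₁ = v v₁`, `e₂ = v v₂`, `e₃ = v₁ v₂` form a triangle of `G`.  With
`G_{1,2} = G - e₃`, `G₁ = G - e₂ - e₃`, `G₂ = G - e₁ - e₃`, `G₃ = G - e₁ - e₂`,
we have `X_G = 2 X_{G_{1,2}} + X_{G₃} - X_{G₁} - X_{G₂}`. -/
theorem csf_wedge_erase {V : Type*} [Fintype V] (G : SimpleGraph V)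
    (v v₁ v₂ : V) (h₁ : G.Adj v v₁) (h₂ : G.Adj v v₂) (h₃ : G.Adj v₁ v₂) :
    ∀ n, csf G n =
      2 * csf (G.deleteEdges {s(v₁, v₂)}) n +
        csf (G.deleteEdges {s(v, v₁), s(v, v₂)}) n -
        csf (G.deleteEdges {s(v, v₂), s(v₁, v₂)}) n -
        csf (G.deleteEdges {s(v, v₁), s(v₁, v₂)}) n := by
  classical
  intro n
  set t : Set (Sym2 V) := {s(v, v₁), s(v, v₂), s(v₁, v₂)}
  have ht : t ⊆ G.edgeSet := by simp [t, Set.insert_subset_iff, h₁, h₂, h₃]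
  have hne : v ≠ v₁ ∧ v₁ ≠ v ∧ v ≠ v₂ ∧ v₂ ≠ v ∧ v₁ ≠ v₂ ∧ v₂ ≠ v₁ :=
    ⟨h₁.ne, h₁.ne', h₂.ne, h₂.ne', h₃.ne, h₃.ne'⟩
  nth_rw 1 [← G.deleteEdges_empty]
  rw [csf_deleteEdges_eq_sum G ht (r := t) (s := ∅) (by simp) (by simp),
    csf_deleteEdges_eq_sum G ht (r := {s(v, v₁), s(v, v₂)}) (s := {s(v₁, v₂)}) (by simp [hne])
      (by rw [Set.insert_union, Set.singleton_union]),
    csf_deleteEdges_eq_sum G ht (r := {s(v₁, v₂)}) (s := {s(v, v₁), s(v, v₂)}) (by simp [hne])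
      (by rw [Set.singleton_union, Set.insert_comm, Set.pair_comm]),
    csf_deleteEdges_eq_sum G ht (r := {s(v, v₁)}) (s := {s(v, v₂), s(v₁, v₂)}) (by simp [hne])
      (by rw [Set.singleton_union]),
    csf_deleteEdges_eq_sum G ht (r := {s(v, v₂)}) (s := {s(v, v₁), s(v₁, v₂)}) (by simp [hne])
      (by rw [Set.singleton_union, Set.insert_comm])]
  simp only [t, Set.forall_mem_insert, Set.mem_singleton_iff, forall_eq, Sym2.map_mk,
    Sym2.mk_isDiag_iff, Finset.mul_sum, ← Finset.sum_add_distrib, ← Finset.sum_sub_distrib]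
  refine Finset.sum_congr rfl fun κ _ => ?_
  rw [ite_pairwise_ne_eq]
  ring
end

section
/- Let G be a finite simple graph with four vertices u, v, w, z such that uz, wz, vw ∈ E(G) and uw, vz, uv ∉ E(G). Suppose there exists a graph automorphism φ of (V(G), E(G) − {wz}) such that φ({u,w}) = {v,z} and φ({v,z}) = {u,w}. Then the graphs H = (V(G), E(G) ∪ {uw}) and J = (V(G), E(G) ∪ {vz}) have the same chromatic symmetric function. -/
open SimpleGraph

/-- Decomposition of properness for `G ⊔ {u'w'}` in terms of `G - wz`. -/
private lemma cond_iff {V : Type*} {n : ℕ} (G : SimpleGraph V) (w z u' w' : V)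
    (hne : u' ≠ w') (awz : G.Adj w z) (κ : V → Fin n) :
    (∀ a b, (G ⊔ fromEdgeSet {s(u', w')}).Adj a b → κ a ≠ κ b) ↔
      ((∀ a b, (G.deleteEdges {s(w, z)}).Adj a b → κ a ≠ κ b) ∧
        κ w ≠ κ z ∧ κ u' ≠ κ w') := by
  constructor
  · intro h
    refine ⟨fun a b hab => h a b (Or.inl (SimpleGraph.deleteEdges_adj.mp hab).1),
      h w z (Or.inl awz), h u' w' (Or.inr ?_)⟩
    exact (SimpleGraph.fromEdgeSet_adj _).mpr ⟨rfl, hne⟩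
  · rintro ⟨hP, h1, h2⟩ a b hab
    rcases hab with hab | hab
    · by_cases he : s(a, b) = s(w, z)
      · rcases Sym2.eq_iff.mp he with ⟨rfl, rfl⟩ | ⟨rfl, rfl⟩
        · exact h1
        · exact h1.symm
      · exact hP a b (SimpleGraph.deleteEdges_adj.mpr ⟨hab, by simpa using he⟩)
    · obtain ⟨he, _⟩ := (SimpleGraph.fromEdgeSet_adj _).mp hab
      rcases Sym2.eq_iff.mp (by simpa using he) with ⟨rfl, rfl⟩ | ⟨rfl, rfl⟩
      · exact h2
      · exact h2.symm

/-- The key combinatorial step: composing a coloring with the automorphism. -/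
private lemma aux_step {V : Type*} {n : ℕ} (H : SimpleGraph V) (ψ : H ≃g H)
    (u v w z : V)
    (auz : H.Adj u z) (avw : H.Adj v w)
    (hψ₁ : (ψ u = v ∧ ψ w = z) ∨ (ψ u = z ∧ ψ w = v))
    (hψ₂ : (ψ v = u ∧ ψ z = w) ∨ (ψ v = w ∧ ψ z = u))
    (κ : V → Fin n)
    (hP : ∀ a b, H.Adj a b → κ a ≠ κ b)
    (hwz : κ w ≠ κ z) (huw : κ u ≠ κ w) (hvz : κ v = κ z) :
    (∀ a b, H.Adj a b → κ (ψ a) ≠ κ (ψ b)) ∧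
      κ (ψ w) ≠ κ (ψ z) ∧ κ (ψ v) ≠ κ (ψ z) ∧ κ (ψ u) = κ (ψ w) := by
  have hvw' : κ v ≠ κ w := hP v w avw
  have huz' : κ u ≠ κ z := hP u z auz
  have hvu : κ v ≠ κ u := by rw [hvz]; exact fun h => huz' h.symm
  refine ⟨fun a b hab => hP _ _ (ψ.map_adj_iff.mpr hab), ?_, ?_, ?_⟩ <;>
    rcases hψ₁ with ⟨h1, h2⟩ | ⟨h1, h2⟩ <;> rcases hψ₂ with ⟨h3, h4⟩ | ⟨h3, h4⟩ <;>
      simp only [h1, h2, h3, h4] <;>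
      first
        | exact hwz.symm
        | exact huz'.symm
        | exact huw
        | exact huw.symm
        | exact hvw'
        | exact hvu
        | exact hvz
        | exact hvz.symm

/-- Let `G` have four (distinct) vertices `u, v, w, z` with `uz, wz, vw ∈ E(G)` and
`uw, vz, uv ∉ E(G)`.  If there is an automorphism `φ` of `G - wz` with
`φ({u,w}) = {v,z}` and `φ({v,z}) = {u,w}`, then `G + uw` and `G + vz` have the same
chromatic symmetric function. -/
theorem csf_eq_of_swap_automorphism {V : Type*} [Fintype V] (G : SimpleGraph V)
    (u v w z : V)
    (huv : u ≠ v) (huw : u ≠ w) (huz : u ≠ z) (hvw : v ≠ w) (hvz : v ≠ z) (hwz : w ≠ z)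
    (auz : G.Adj u z) (awz : G.Adj w z) (avw : G.Adj v w)
    (nuw : ¬ G.Adj u w) (nvz : ¬ G.Adj v z) (nuv : ¬ G.Adj u v)
    (φ : G.deleteEdges {s(w, z)} ≃g G.deleteEdges {s(w, z)})
    (hφ₁ : ({φ u, φ w} : Set V) = {v, z})
    (hφ₂ : ({φ v, φ z} : Set V) = {u, w}) :
    ∀ n, csf (G ⊔ fromEdgeSet {s(u, w)}) n = csf (G ⊔ fromEdgeSet {s(v, z)}) n := by
  classical
  intro n
  -- adjacencies within `G - wz`
  have hH_uz : (G.deleteEdges {s(w, z)}).Adj u z := by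
    rw [SimpleGraph.deleteEdges_adj]
    refine ⟨auz, ?_⟩
    simp only [Set.mem_singleton_iff, Sym2.eq_iff]
    rintro (⟨h, -⟩ | ⟨h, -⟩)
    · exact huw h
    · exact huz h
  have hH_vw : (G.deleteEdges {s(w, z)}).Adj v w := by
    rw [SimpleGraph.deleteEdges_adj]
    refine ⟨avw, ?_⟩
    simp only [Set.mem_singleton_iff, Sym2.eq_iff]
    rintro (⟨-, h⟩ | ⟨h, -⟩)
    · exact hwz h
    · exact hvz h
  -- disjunction forms of the automorphism conditions
  have d₁ : (φ u = v ∧ φ w = z) ∨ (φ u = z ∧ φ w = v) := by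
    have hu : φ u ∈ ({v, z} : Set V) := by
      rw [← hφ₁]; exact Set.mem_insert_iff.mpr (Or.inl rfl)
    have hw : φ w ∈ ({v, z} : Set V) := by
      rw [← hφ₁]; exact Set.mem_insert_iff.mpr (Or.inr rfl)
    have hne : φ u ≠ φ w := fun h => huw (φ.toEquiv.injective h)
    simp only [Set.mem_insert_iff, Set.mem_singleton_iff] at hu hw
    rcases hu with h | h <;> rcases hw with h' | h'
    · exact absurd (h.trans h'.symm) hne
    · exact Or.inl ⟨h, h'⟩
    · exact Or.inr ⟨h, h'⟩
    · exact absurd (h.trans h'.symm) hne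
  have d₂ : (φ v = u ∧ φ z = w) ∨ (φ v = w ∧ φ z = u) := by
    have hu : φ v ∈ ({u, w} : Set V) := by
      rw [← hφ₂]; exact Set.mem_insert_iff.mpr (Or.inl rfl)
    have hw : φ z ∈ ({u, w} : Set V) := by
      rw [← hφ₂]; exact Set.mem_insert_iff.mpr (Or.inr rfl)
    have hne : φ v ≠ φ z := fun h => hvz (φ.toEquiv.injective h)
    simp only [Set.mem_insert_iff, Set.mem_singleton_iff] at hu hw
    rcases hu with h | h <;> rcases hw with h' | h'
    · exact absurd (h.trans h'.symm) hne
    · exact Or.inl ⟨h, h'⟩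
    · exact Or.inr ⟨h, h'⟩
    · exact absurd (h.trans h'.symm) hne
  have sy : ∀ a b : V, φ a = b → φ.symm b = a := by
    intro a b h
    subst h
    exact φ.symm_apply_apply a
  have d₁' : (φ.symm v = u ∧ φ.symm z = w) ∨ (φ.symm v = w ∧ φ.symm z = u) := by
    rcases d₁ with ⟨h1, h2⟩ | ⟨h1, h2⟩
    · exact Or.inl ⟨sy _ _ h1, sy _ _ h2⟩
    · exact Or.inr ⟨sy _ _ h2, sy _ _ h1⟩
  have d₂' : (φ.symm u = v ∧ φ.symm w = z) ∨ (φ.symm u = z ∧ φ.symm w = v) := by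
    rcases d₂ with ⟨h1, h2⟩ | ⟨h1, h2⟩
    · exact Or.inl ⟨sy _ _ h1, sy _ _ h2⟩
    · exact Or.inr ⟨sy _ _ h2, sy _ _ h1⟩
  -- rewrite both csf's as sums over filtered sets
  have e1 : csf (G ⊔ fromEdgeSet {s(u, w)}) n =
      ∑ κ ∈ Finset.univ.filter
        (fun κ : V → Fin n =>
          (∀ a b, (G.deleteEdges {s(w, z)}).Adj a b → κ a ≠ κ b) ∧ κ w ≠ κ z ∧ κ u ≠ κ w),
        ∏ x, MvPolynomial.X (κ x) := by
    unfold csf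
    rw [Finset.sum_filter]
    refine Finset.sum_congr rfl fun κ _ => ?_
    by_cases h : (∀ a b, (G.deleteEdges {s(w, z)}).Adj a b → κ a ≠ κ b) ∧
        κ w ≠ κ z ∧ κ u ≠ κ w
    · rw [if_pos ((cond_iff G w z u w huw awz κ).mpr h), if_pos h]
    · rw [if_neg (fun hh => h ((cond_iff G w z u w huw awz κ).mp hh)), if_neg h]
  have e2 : csf (G ⊔ fromEdgeSet {s(v, z)}) n =
      ∑ κ ∈ Finset.univ.filter
        (fun κ : V → Fin n =>
          (∀ a b, (G.deleteEdges {s(w, z)}).Adj a b → κ a ≠ κ b) ∧ κ w ≠ κ z ∧ κ v ≠ κ z),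
        ∏ x, MvPolynomial.X (κ x) := by
    unfold csf
    rw [Finset.sum_filter]
    refine Finset.sum_congr rfl fun κ _ => ?_
    by_cases h : (∀ a b, (G.deleteEdges {s(w, z)}).Adj a b → κ a ≠ κ b) ∧
        κ w ≠ κ z ∧ κ v ≠ κ z
    · rw [if_pos ((cond_iff G w z v z hvz awz κ).mpr h), if_pos h]
    · rw [if_neg (fun hh => h ((cond_iff G w z v z hvz awz κ).mp hh)), if_neg h]
  rw [e1, e2]
  refine Finset.sum_nbij'
    (fun κ => if κ v = κ z then κ ∘ φ else κ)
    (fun κ => if κ u = κ w then κ ∘ φ.symm else κ)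
    ?_ ?_ ?_ ?_ ?_
  · intro κ hκ
    simp only [Finset.mem_filter, Finset.mem_univ, true_and] at hκ ⊢
    obtain ⟨hP, h1, h2⟩ := hκ
    by_cases hc : κ v = κ z
    · rw [if_pos hc]
      obtain ⟨hP', hA, hB, -⟩ :=
        aux_step (G.deleteEdges {s(w, z)}) φ u v w z hH_uz hH_vw d₁ d₂ κ hP h1 h2 hc
      exact ⟨hP', hA, hB⟩
    · rw [if_neg hc]
      exact ⟨hP, h1, hc⟩
  · intro κ hκ
    simp only [Finset.mem_filter, Finset.mem_univ, true_and] at hκ ⊢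
    obtain ⟨hP, h1, h2⟩ := hκ
    by_cases hc : κ u = κ w
    · rw [if_pos hc]
      obtain ⟨hP', hA, hB, -⟩ :=
        aux_step (G.deleteEdges {s(w, z)}) φ.symm v u z w hH_vw hH_uz d₁' d₂' κ hP
          (fun h => h1 h.symm) h2 hc
      exact ⟨hP', fun h => hA h.symm, hB⟩
    · rw [if_neg hc]
      exact ⟨hP, h1, hc⟩
  · intro κ hκ
    simp only [Finset.mem_filter, Finset.mem_univ, true_and] at hκ
    obtain ⟨hP, h1, h2⟩ := hκ
    by_cases hc : κ v = κ z
    · rw [if_pos hc]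
      obtain ⟨-, -, -, hC⟩ :=
        aux_step (G.deleteEdges {s(w, z)}) φ u v w z hH_uz hH_vw d₁ d₂ κ hP h1 h2 hc
      have hC' : (κ ∘ ⇑φ) u = (κ ∘ ⇑φ) w := hC
      rw [if_pos hC']
      funext x
      exact congrArg κ (φ.apply_symm_apply x)
    · rw [if_neg hc, if_neg h2]
  · intro κ hκ
    simp only [Finset.mem_filter, Finset.mem_univ, true_and] at hκ
    obtain ⟨hP, h1, h2⟩ := hκ
    by_cases hc : κ u = κ w
    · rw [if_pos hc]
      obtain ⟨-, -, -, hC⟩ :=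
        aux_step (G.deleteEdges {s(w, z)}) φ.symm v u z w hH_vw hH_uz d₁' d₂' κ hP
          (fun h => h1 h.symm) h2 hc
      have hC' : (κ ∘ ⇑φ.symm) v = (κ ∘ ⇑φ.symm) z := hC
      rw [if_pos hC']
      funext x
      exact congrArg κ (φ.symm_apply_apply x)
    · rw [if_neg hc, if_neg h2]
  · intro κ hκ
    by_cases hc : κ v = κ z
    · rw [if_pos hc]
      exact (Equiv.prod_comp φ.toEquiv fun x => MvPolynomial.X (κ x)).symm
    · rw [if_neg hc]
end

section
/- Let T be a tree of order n with distinct edges e_a, e_b, and suppose θ_T(e_a) = (n−i, i) and θ_T(e_b) = (n−k, k) with i ≥ k. Then θ_T({e_a, e_b}) equals the decreasing rearrangement of (n−i, i−k, k) if and only if e_a and e_b attract. -/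
/-!
Orient the edges as `e_a = a₁a₂`, `e_b = b₁b₂` so that `T - {e_a, e_b}` has the three components
`X ∋ a₁`, `Y ∋ a₂, b₁` and `Z ∋ b₂`. Then `θ(e_a) = {|X|, |Y| + |Z|}`, `θ(e_b) = {|X| + |Y|, |Z|}`
and `θ({e_a, e_b}) = {|X|, |Y|, |Z|}`; the hypotheses force `|Z| = k`, and the triple is
`re(n - i, i - k, k)` exactly when `|X| = n - i`, i.e. `|X| ≥ |Y| + |Z|`.

A path from a centroid vertex `c` contains both edges iff `c ∈ X ∪ Z`. For an edge `uv` with sides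
`S_u ∋ u`, `S_v ∋ v`, the weight of `u` is at most `max |S_v| (|S_u| - 1)`, while every vertex of
`S_u` has weight at least `|S_v|`. Hence the centroid meets the larger side of every edge and avoids
a strictly smaller one, so the edges attract iff `|X| ≥ |Y| + |Z|` or `|Z| ≥ |X| + |Y|`; the latter
only happens when `k = n / 2`, which again forces `|X| = n - i`.
-/

open SimpleGraph

/-- The multiset of sizes of the connected components of `G`. -/
noncomputable def componentSizes {V : Type*} [Finite V] (G : SimpleGraph V) : Multiset ℕ :=
  haveI : Fintype G.ConnectedComponent := Fintype.ofFinite _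
  (Finset.univ : Finset G.ConnectedComponent).val.map fun c => c.supp.ncard

/-- `theta T S` is the partition (as a multiset) of `|V|` whose parts are the sizes of
the connected components of `T` with the edges of `S` removed. -/
noncomputable def theta {V : Type*} [Finite V] (T : SimpleGraph V) (S : Set (Sym2 V)) :
    Multiset ℕ := componentSizes (T.deleteEdges S)

/-- The weight of a vertex `v` of a tree `T`: the maximal number of edges of a subtree
of `T` containing `v` as a leaf; equivalently, the maximal number of vertices of a
connected component of `T - v`. -/
noncomputable def weight {V : Type*} [Finite V] (T : SimpleGraph V) (v : V) : ℕ :=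
  sSup (Set.range fun c : ((⊤ : T.Subgraph).deleteVerts {v}).coe.ConnectedComponent =>
    c.supp.ncard)

/-- The centroid of `T`: the set of vertices of minimal weight. -/
def centroid {V : Type*} [Finite V] (T : SimpleGraph V) : Set V :=
  {v | ∀ u, weight T v ≤ weight T u}

/-- Two edges of `T` attract if some path in `T` contains both of them and has a
centroid of `T` as one endpoint. -/
def Attract {V : Type*} [Finite V] (T : SimpleGraph V) (ea eb : Sym2 V) : Prop :=
  ∃ (c x : V) (p : T.Walk c x), c ∈ centroid T ∧ p.IsPath ∧ ea ∈ p.edges ∧ eb ∈ p.edges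

namespace SimpleGraph

section Reachability

variable {V : Type*}

theorem Reachable.deleteEdges_singleton_or {H : SimpleGraph V} {x y : V} (h : H.Reachable x y)
    (a b : V) :
    (H.deleteEdges {s(a, b)}).Reachable x y ∨ (H.deleteEdges {s(a, b)}).Reachable x a ∨
      (H.deleteEdges {s(a, b)}).Reachable x b := by
  obtain ⟨p⟩ := h
  induction p with
  | nil => exact Or.inl .rfl
  | @cons u v w huv _ ih =>
    by_cases he : s(u, v) = s(a, b)
    · rcases Sym2.eq_iff.1 he with ⟨rfl, -⟩ | ⟨rfl, -⟩
      exacts [Or.inr (Or.inl .rfl), Or.inr (Or.inr .rfl)]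
    · have hadj : (H.deleteEdges {s(a, b)}).Adj u v := by simp [huv, he]
      exact ih.imp hadj.reachable.trans (Or.imp hadj.reachable.trans hadj.reachable.trans)

theorem reachable_deleteEdges_iff_of_not_reachable {H : SimpleGraph V} {u w a b : V}
    (ha : ¬H.Reachable u a) (hb : ¬H.Reachable u b) :
    (H.deleteEdges {s(a, b)}).Reachable w u ↔ H.Reachable w u := by
  refine ⟨fun h => h.mono (deleteEdges_le _), fun h => ?_⟩
  rcases h.symm.deleteEdges_singleton_or a b with h | h | h
  · exact h.symm
  · exact absurd (h.mono (deleteEdges_le _)) ha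
  · exact absurd (h.mono (deleteEdges_le _)) hb

theorem Preconnected.reachable_deleteEdges_or {T : SimpleGraph V} (hT : T.Preconnected)
    (w u v : V) :
    (T.deleteEdges {s(u, v)}).Reachable w u ∨ (T.deleteEdges {s(u, v)}).Reachable w v := by
  rcases (hT w u).deleteEdges_singleton_or u v with h | h | h
  exacts [Or.inl h, Or.inl h, Or.inr h]

theorem IsAcyclic.not_reachable_deleteEdges_of_adj {T : SimpleGraph V} (hT : T.IsAcyclic)
    {u v : V} (h : T.Adj u v) : ¬(T.deleteEdges {s(u, v)}).Reachable u v :=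
  isBridge_iff.1 (isAcyclic_iff_forall_adj_isBridge.1 hT h)

theorem IsAcyclic.not_reachable_deleteEdges_of_mem_edges {T : SimpleGraph V} (hT : T.IsAcyclic)
    {c x u v : V} {p : T.Walk c x} (hp : p.IsPath) (he : s(u, v) ∈ p.edges) :
    ¬(T.deleteEdges {s(u, v)}).Reachable c x := by
  classical
  rw [reachable_deleteEdges_iff_exists_walk]
  rintro ⟨q, hq⟩
  have hpq : p = q.bypass :=
    congrArg Subtype.val ((hT.subsingleton_path c x).elim ⟨p, hp⟩ q.toPath)
  exact hq (q.edges_bypass_subset_edges (hpq ▸ he))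

def edgeSide (T : SimpleGraph V) (u v : V) : Set V :=
  {w | (T.deleteEdges {s(u, v)}).Reachable w u}

theorem self_mem_edgeSide (T : SimpleGraph V) (u v : V) : u ∈ edgeSide T u v := .rfl

theorem edgeSide_swap (T : SimpleGraph V) (u v : V) :
    edgeSide T v u = {w | (T.deleteEdges {s(u, v)}).Reachable w v} := by
  rw [edgeSide, Sym2.eq_swap]

theorem Preconnected.mem_edgeSide_or {T : SimpleGraph V} (hT : T.Preconnected) (w u v : V) :
    w ∈ edgeSide T u v ∨ w ∈ edgeSide T v u := by
  rw [edgeSide_swap T u v]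
  exact hT.reachable_deleteEdges_or w u v

theorem IsAcyclic.disjoint_edgeSide {T : SimpleGraph V} (hT : T.IsAcyclic) {u v : V}
    (h : T.Adj u v) : Disjoint (edgeSide T u v) (edgeSide T v u) := by
  rw [edgeSide_swap T u v, Set.disjoint_left]
  exact fun w hu hv => hT.not_reachable_deleteEdges_of_adj h (hu.symm.trans hv)

end Reachability

section EdgePair

variable {V : Type*} {T : SimpleGraph V}

theorem Preconnected.exists_reachable_deleteEdges_pair (hT : T.Preconnected) (ea eb : Sym2 V) :
    ∃ a1 a2 b1 b2, ea = s(a1, a2) ∧ eb = s(b1, b2) ∧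
      (T.deleteEdges {ea, eb}).Reachable a2 b1 := by
  induction ea using Sym2.ind with | _ x y => ?_
  induction eb using Sym2.ind with | _ u v => ?_
  obtain ⟨a1, a2, hA, hu⟩ : ∃ a1 a2, s(x, y) = s(a1, a2) ∧
      (T.deleteEdges {s(x, y)}).Reachable a2 u := by
    rcases hT.reachable_deleteEdges_or u x y with h | h
    exacts [⟨y, x, Sym2.eq_swap, h.symm⟩, ⟨x, y, rfl, h.symm⟩]
  rw [← Set.singleton_union, ← deleteEdges_deleteEdges]
  rcases hu.deleteEdges_singleton_or u v with h | h | h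
  exacts [⟨a1, a2, u, v, hA, rfl, h⟩, ⟨a1, a2, u, v, hA, rfl, h⟩,
    ⟨a1, a2, v, u, hA, Sym2.eq_swap, h⟩]

variable {a1 a2 b1 b2 : V}

theorem reachable_deleteEdges_left_of_reachable_deleteEdges_pair (hb : T.Adj b1 b2)
    (hne : s(a1, a2) ≠ s(b1, b2))
    (hmid : (T.deleteEdges {s(a1, a2), s(b1, b2)}).Reachable a2 b1) :
    (T.deleteEdges {s(a1, a2)}).Reachable a2 b2 :=
  (hmid.mono (deleteEdges_anti (by simp))).trans (Adj.reachable (by simp [hb, hne.symm]))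

theorem reachable_deleteEdges_right_of_reachable_deleteEdges_pair (ha : T.Adj a1 a2)
    (hne : s(a1, a2) ≠ s(b1, b2))
    (hmid : (T.deleteEdges {s(a1, a2), s(b1, b2)}).Reachable a2 b1) :
    (T.deleteEdges {s(b1, b2)}).Reachable b1 a1 := by
  have ha' : (T.deleteEdges {s(b1, b2)}).Adj a1 a2 := by simp [ha, hne]
  exact (hmid.mono (deleteEdges_anti (by simp))).symm.trans ha'.symm.reachable

theorem edgeSide_eq_reachable_deleteEdges_pair_left (hT : T.IsAcyclic) (ha : T.Adj a1 a2)
    (hb : T.Adj b1 b2) (hne : s(a1, a2) ≠ s(b1, b2))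
    (hmid : (T.deleteEdges {s(a1, a2), s(b1, b2)}).Reachable a2 b1) :
    T.edgeSide a1 a2 = {w | (T.deleteEdges {s(a1, a2), s(b1, b2)}).Reachable w a1} := by
  have hbridge := hT.not_reachable_deleteEdges_of_adj ha
  have hab2 := reachable_deleteEdges_left_of_reachable_deleteEdges_pair hb hne hmid
  rw [← Set.singleton_union, ← deleteEdges_deleteEdges] at hmid ⊢
  ext w
  refine (reachable_deleteEdges_iff_of_not_reachable (fun h => hbridge ?_)
    (fun h => hbridge (h.trans hab2.symm))).symm
  exact h.trans (hmid.mono (deleteEdges_le _)).symm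

theorem edgeSide_eq_reachable_deleteEdges_pair_right (hT : T.IsAcyclic) (ha : T.Adj a1 a2)
    (hb : T.Adj b1 b2) (hne : s(a1, a2) ≠ s(b1, b2))
    (hmid : (T.deleteEdges {s(a1, a2), s(b1, b2)}).Reachable a2 b1) :
    T.edgeSide b2 b1 = {w | (T.deleteEdges {s(a1, a2), s(b1, b2)}).Reachable w b2} := by
  have hbridge := hT.not_reachable_deleteEdges_of_adj hb
  have hba1 := reachable_deleteEdges_right_of_reachable_deleteEdges_pair ha hne hmid
  rw [Set.pair_comm, ← Set.singleton_union, ← deleteEdges_deleteEdges] at hmid ⊢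
  rw [edgeSide_swap]
  ext w
  refine (reachable_deleteEdges_iff_of_not_reachable (fun h => hbridge (hba1.trans h.symm))
    (fun h => hbridge ?_)).symm
  exact (hmid.mono (deleteEdges_le _)).symm.trans h.symm

end EdgePair

section Weight

variable {V : Type*}

theorem reachable_deleteVerts_of_walk {T G' : SimpleGraph V} (hle : G' ≤ T) {w x y : V}
    (p : G'.Walk x y) (hw : w ∉ p.support) (hx : x ∈ ((⊤ : T.Subgraph).deleteVerts {w}).verts)
    (hy : y ∈ ((⊤ : T.Subgraph).deleteVerts {w}).verts) :
    ((⊤ : T.Subgraph).deleteVerts {w}).coe.Reachable ⟨x, hx⟩ ⟨y, hy⟩ := by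
  let φ : T.induce {w}ᶜ →g ((⊤ : T.Subgraph).deleteVerts {w}).coe :=
    ⟨fun z => ⟨z.1, by simpa using Set.mem_compl_singleton_iff.1 z.2⟩, fun {a b} h => by
      simpa [Set.mem_compl_singleton_iff.1 a.2, Set.mem_compl_singleton_iff.1 b.2] using h⟩
  have hsupp : ∀ z ∈ (p.mapLe hle).support, z ∈ ({w}ᶜ : Set V) := by
    rw [Walk.support_mapLe_eq_support]
    rintro z hz rfl
    exact hw hz
  exact ⟨((p.mapLe hle).induce _ hsupp).map φ⟩

theorem Reachable.of_deleteVerts {T H : SimpleGraph V} {w : V}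
    (hH : ∀ a b, T.Adj a b → a ≠ w → b ≠ w → H.Adj a b)
    {x y : ((⊤ : T.Subgraph).deleteVerts {w}).verts}
    (h : ((⊤ : T.Subgraph).deleteVerts {w}).coe.Reachable x y) : H.Reachable x y := by
  let φ : ((⊤ : T.Subgraph).deleteVerts {w}).coe →g H :=
    ⟨Subtype.val, fun {a b} h => by
      simp only [Subgraph.coe_adj, Subgraph.deleteVerts_adj] at h
      exact hH _ _ h.2.2.2.2 h.2.1 h.2.2.2.1⟩
  exact h.map φ

variable [Finite V]

theorem ncard_le_weight {T G' : SimpleGraph V} (hle : G' ≤ T) {u w : V}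
    (h : ¬G'.Reachable u w) : {x | G'.Reachable x u}.ncard ≤ weight T w := by
  classical
  have hne : ∀ {x}, G'.Reachable x u → x ∈ ((⊤ : T.Subgraph).deleteVerts {w}).verts := by
    rintro x hx
    simp only [Subgraph.deleteVerts_verts, Subgraph.verts_top, Set.mem_sdiff, Set.mem_univ,
      Set.mem_singleton_iff, true_and]
    rintro rfl
    exact h hx.symm
  let c := ((⊤ : T.Subgraph).deleteVerts {w}).coe.connectedComponentMk ⟨u, hne .rfl⟩
  have hsub : {x | G'.Reachable x u} ⊆ Subtype.val '' c.supp := by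
    rintro x ⟨p⟩
    have hw : w ∉ p.support := fun hz => h ⟨(p.dropUntil w hz).reverse⟩
    exact ⟨⟨x, hne ⟨p⟩⟩,
      ConnectedComponent.sound (reachable_deleteVerts_of_walk hle p hw _ _), rfl⟩
  calc {x | G'.Reachable x u}.ncard
      ≤ (Subtype.val '' c.supp).ncard := Set.ncard_le_ncard hsub (Set.toFinite _)
    _ = c.supp.ncard := Set.ncard_image_of_injective _ Subtype.val_injective
    _ ≤ weight T w := le_csSup (Set.finite_range _).bddAbove ⟨c, rfl⟩

theorem IsAcyclic.ncard_edgeSide_le_weight {T : SimpleGraph V} (hT : T.IsAcyclic) {u v w : V}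
    (h : T.Adj u v) (hw : w ∈ edgeSide T u v) : (edgeSide T v u).ncard ≤ weight T w :=
  ncard_le_weight (deleteEdges_le _) fun hvw =>
    (hT.disjoint_edgeSide h).notMem_of_mem_left hw hvw.symm

theorem weight_le_of_forall_ncard_le {T : SimpleGraph V} {w : V} {m : ℕ}
    (h : ∀ c : ((⊤ : T.Subgraph).deleteVerts {w}).coe.ConnectedComponent, c.supp.ncard ≤ m) :
    weight T w ≤ m :=
  csSup_le' (Set.forall_mem_range.2 h)

variable {T : SimpleGraph V}

theorem weight_le_of_adj (hT : T.IsTree) {u v : V} (h : T.Adj u v) :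
    weight T u ≤ max (edgeSide T v u).ncard ((edgeSide T u v).ncard - 1) := by
  classical
  have hv : v ∈ ((⊤ : T.Subgraph).deleteVerts {u}).verts := by simpa using h.ne'
  refine weight_le_of_forall_ncard_le fun c => ?_
  rw [← Set.ncard_image_of_injective _ Subtype.val_injective]
  by_cases hvc : ⟨v, hv⟩ ∈ c.supp
  · refine le_max_of_le_left (Set.ncard_le_ncard ?_ (Set.toFinite _))
    rintro _ ⟨x, hx, rfl⟩
    refine Reachable.of_deleteVerts (fun a b hab ha hb => ?_)
      (ConnectedComponent.exact (hx.trans hvc.symm))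
    simp [hab, ha, hb]
  · refine le_max_of_le_right ?_
    rw [← Set.ncard_sdiff_singleton_of_mem (self_mem_edgeSide T u v)]
    refine Set.ncard_le_ncard ?_ (Set.toFinite _)
    rintro _ ⟨x, hx, rfl⟩
    refine ⟨?_, by simpa using x.2⟩
    refine (hT.connected.preconnected.reachable_deleteEdges_or x u v).resolve_right ?_
    rintro ⟨q⟩
    have hu : u ∉ q.support := fun hz =>
      hT.isAcyclic.not_reachable_deleteEdges_of_adj h ⟨q.dropUntil u hz⟩
    exact hvc (hx ▸ ConnectedComponent.sound
      (reachable_deleteVerts_of_walk (deleteEdges_le _) q hu x.2 hv).symm)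

theorem notMem_edgeSide_of_mem_centroid (hT : T.IsTree) {u v c : V} (h : T.Adj u v)
    (hlt : (edgeSide T u v).ncard < (edgeSide T v u).ncard) (hc : c ∈ centroid T) :
    c ∉ edgeSide T u v := by
  intro hcu
  have hcv := hT.isAcyclic.ncard_edgeSide_le_weight h hcu
  have hv := weight_le_of_adj hT h.symm
  have := hc v
  omega

theorem exists_mem_centroid_mem_edgeSide (hT : T.IsTree) {u v : V} (h : T.Adj u v)
    (hle : (edgeSide T v u).ncard ≤ (edgeSide T u v).ncard) :
    ∃ c ∈ centroid T, c ∈ edgeSide T u v := by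
  have hcover := hT.connected.preconnected.mem_edgeSide_or
  rcases hle.lt_or_eq with hlt | heq
  · have : Nonempty V := ⟨u⟩
    obtain ⟨c, hc⟩ := Finite.exists_min (weight T)
    exact ⟨c, hc, (hcover c u v).resolve_right
      (notMem_edgeSide_of_mem_centroid hT h.symm hlt hc)⟩
  · refine ⟨u, fun w => ?_, self_mem_edgeSide T u v⟩
    have hu := weight_le_of_adj hT h
    rcases hcover w u v with hw | hw
    · have := hT.isAcyclic.ncard_edgeSide_le_weight h hw
      omega
    · have := hT.isAcyclic.ncard_edgeSide_le_weight h.symm hw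
      omega

end Weight

section Theta

variable {V : Type*} [Finite V]

theorem componentSizes_eq_map (G : SimpleGraph V) (l : List V)
    (hl : l.Pairwise fun x y => ¬G.Reachable x y) (hcover : ∀ w, ∃ x ∈ l, G.Reachable w x) :
    componentSizes G = (l.map fun x => {w | G.Reachable w x}.ncard : Multiset ℕ) := by
  classical
  let _ : Fintype G.ConnectedComponent := Fintype.ofFinite _
  have hnodup : Multiset.Nodup (l.map G.connectedComponentMk : Multiset G.ConnectedComponent) :=
    Multiset.coe_nodup.2 <| List.pairwise_map.2 <|
      hl.imp fun h heq => h (ConnectedComponent.exact heq)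
  have huniv : (Finset.univ : Finset G.ConnectedComponent).val = l.map G.connectedComponentMk :=
    (Multiset.Nodup.ext Finset.univ.nodup hnodup).2 fun c => iff_of_true (Finset.mem_univ c) <| by
      induction c using ConnectedComponent.ind with | h w => ?_
      obtain ⟨x, hx, hwx⟩ := hcover w
      exact Multiset.mem_coe.2 (List.mem_map.2 ⟨x, hx, ConnectedComponent.sound hwx.symm⟩)
  unfold componentSizes
  rw [huniv, Multiset.map_coe, List.map_map]
  congr 2
  ext x
  exact congrArg Set.ncard (Set.ext fun w => ConnectedComponent.eq)

theorem sum_componentSizes (G : SimpleGraph V) : (componentSizes G).sum = Nat.card V := by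
  classical
  let _ : Fintype G.ConnectedComponent := Fintype.ofFinite _
  unfold componentSizes
  rw [← Finset.sum_eq_multiset_sum,
    Nat.card_congr (Equiv.sigmaFiberEquiv G.connectedComponentMk).symm, Nat.card_sigma]
  exact Finset.sum_congr rfl fun c _ => (Nat.card_coe_set_eq c.supp).symm

theorem sum_theta (T : SimpleGraph V) (S : Set (Sym2 V)) : (theta T S).sum = Nat.card V :=
  sum_componentSizes _

variable {T : SimpleGraph V}

theorem theta_edge (hT : T.IsTree) {u v : V} (h : T.Adj u v) :
    theta T {s(u, v)} = {(T.edgeSide u v).ncard, (T.edgeSide v u).ncard} := by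
  rw [theta, componentSizes_eq_map _ [u, v], edgeSide_swap T u v]
  · rfl
  · simpa using hT.isAcyclic.not_reachable_deleteEdges_of_adj h
  · exact fun w => by simpa using hT.connected.preconnected.reachable_deleteEdges_or w u v

variable {a1 a2 b1 b2 : V}

theorem theta_pair (hT : T.IsTree) (ha : T.Adj a1 a2) (hb : T.Adj b1 b2)
    (hne : s(a1, a2) ≠ s(b1, b2))
    (hmid : (T.deleteEdges {s(a1, a2), s(b1, b2)}).Reachable a2 b1) :
    theta T {s(a1, a2), s(b1, b2)} = {(T.edgeSide a1 a2).ncard,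
      {w | (T.deleteEdges {s(a1, a2), s(b1, b2)}).Reachable w a2}.ncard,
      (T.edgeSide b2 b1).ncard} := by
  have hX := edgeSide_eq_reachable_deleteEdges_pair_left hT.isAcyclic ha hb hne hmid
  have hZ := edgeSide_eq_reachable_deleteEdges_pair_right hT.isAcyclic ha hb hne hmid
  have hGb : T.deleteEdges {s(a1, a2), s(b1, b2)} ≤ T.deleteEdges {s(b1, b2)} :=
    deleteEdges_anti (by simp)
  have hba1 := reachable_deleteEdges_right_of_reachable_deleteEdges_pair ha hne hmid
  have hbridge_a := hT.isAcyclic.not_reachable_deleteEdges_of_adj ha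
  have hbridge_b := hT.isAcyclic.not_reachable_deleteEdges_of_adj hb
  rw [theta, componentSizes_eq_map _ [a1, a2, b2], hX, hZ]
  · rfl
  · simp only [List.pairwise_cons, List.mem_cons, forall_eq_or_imp,
      List.not_mem_nil, IsEmpty.forall_iff, implies_true, List.Pairwise.nil, and_true]
    exact ⟨⟨fun h => hbridge_a (h.mono (deleteEdges_anti (by simp))),
      fun h => hbridge_b (hba1.trans (h.mono hGb))⟩,
      fun h => hbridge_b ((hmid.symm.trans h).mono hGb)⟩
  · intro w
    rcases hT.connected.preconnected.mem_edgeSide_or w a1 a2 with hw | hw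
    · exact ⟨a1, by simp, by rwa [hX] at hw⟩
    rw [edgeSide_swap] at hw
    rw [← Set.singleton_union, ← deleteEdges_deleteEdges] at hmid ⊢
    rcases hw.deleteEdges_singleton_or b1 b2 with h | h | h
    exacts [⟨a2, by simp, h⟩, ⟨a2, by simp, h.trans hmid.symm⟩, ⟨b2, by simp, h⟩]

theorem attract_iff_exists_separated (hT : T.IsTree) :
    Attract T s(a1, a2) s(b1, b2) ↔ ∃ c ∈ centroid T, ∃ x,
      ¬(T.deleteEdges {s(a1, a2)}).Reachable c x ∧
        ¬(T.deleteEdges {s(b1, b2)}).Reachable c x := by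
  classical
  constructor
  · rintro ⟨c, x, p, hc, hp, hea, heb⟩
    exact ⟨c, hc, x, hT.isAcyclic.not_reachable_deleteEdges_of_mem_edges hp hea,
      hT.isAcyclic.not_reachable_deleteEdges_of_mem_edges hp heb⟩
  · rintro ⟨c, hc, x, hxa, hxb⟩
    obtain ⟨p⟩ := hT.connected.preconnected c x
    have hmem : ∀ {u v}, ¬(T.deleteEdges {s(u, v)}).Reachable c x →
        s(u, v) ∈ p.bypass.edges :=
      fun h => by_contra fun he => h (reachable_deleteEdges_iff_exists_walk.2 ⟨_, he⟩)
    exact ⟨c, x, p.bypass, hc, p.bypass_isPath, hmem hxa, hmem hxb⟩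

theorem attract_iff_exists_mem_centroid_mem_edgeSide (hT : T.IsTree) (ha : T.Adj a1 a2)
    (hb : T.Adj b1 b2) (hne : s(a1, a2) ≠ s(b1, b2))
    (hmid : (T.deleteEdges {s(a1, a2), s(b1, b2)}).Reachable a2 b1) :
    Attract T s(a1, a2) s(b1, b2) ↔
      ∃ c ∈ centroid T, c ∈ T.edgeSide a1 a2 ∨ c ∈ T.edgeSide b2 b1 := by
  have hX := edgeSide_eq_reachable_deleteEdges_pair_left hT.isAcyclic ha hb hne hmid
  have hZ := edgeSide_eq_reachable_deleteEdges_pair_right hT.isAcyclic ha hb hne hmid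
  have hGa : T.deleteEdges {s(a1, a2), s(b1, b2)} ≤ T.deleteEdges {s(a1, a2)} :=
    deleteEdges_anti (by simp)
  have hGb : T.deleteEdges {s(a1, a2), s(b1, b2)} ≤ T.deleteEdges {s(b1, b2)} :=
    deleteEdges_anti (by simp)
  have hab2 := reachable_deleteEdges_left_of_reachable_deleteEdges_pair hb hne hmid
  have hba1 := reachable_deleteEdges_right_of_reachable_deleteEdges_pair ha hne hmid
  have hbridge_a := hT.isAcyclic.not_reachable_deleteEdges_of_adj ha
  have hbridge_b := hT.isAcyclic.not_reachable_deleteEdges_of_adj hb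
  have hcover := hT.connected.preconnected.mem_edgeSide_or
  rw [attract_iff_exists_separated hT]
  constructor
  · rintro ⟨c, hc, x, hxa, hxb⟩
    refine ⟨c, hc, ?_⟩
    by_contra! ⟨hcX, hcZ⟩
    -- then `c ∈ Y`, so `x` is in `X`, on the same side of `e_b` as `c`
    have hca2 := (hcover c a1 a2).resolve_left hcX
    have hcb1 := (hcover c b1 b2).resolve_right hcZ
    rw [edgeSide_swap] at hca2
    have hxX := (hcover x a1 a2).resolve_right fun hx => hxa (by
      rw [edgeSide_swap] at hx; exact hca2.trans hx.symm)
    rw [hX] at hxX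
    exact hxb (hcb1.trans (hba1.trans (hxX.mono hGb).symm))
  · rintro ⟨c, hc, hcX | hcZ⟩
    · refine ⟨c, hc, b2, fun h => hbridge_a (hcX.symm.trans (h.trans hab2.symm)), fun h => ?_⟩
      rw [hX] at hcX
      exact hbridge_b (hba1.trans ((hcX.mono hGb).symm.trans h))
    · refine ⟨c, hc, a1, fun h => ?_, fun h => ?_⟩
      · rw [hZ] at hcZ
        exact hbridge_a (h.symm.trans ((hcZ.mono hGa).trans hab2.symm))
      · rw [edgeSide_swap] at hcZ
        exact hbridge_b (hba1.trans (h.symm.trans hcZ))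

theorem attract_iff_le_or_le (hT : T.IsTree) (ha : T.Adj a1 a2) (hb : T.Adj b1 b2)
    (hne : s(a1, a2) ≠ s(b1, b2))
    (hmid : (T.deleteEdges {s(a1, a2), s(b1, b2)}).Reachable a2 b1) :
    Attract T s(a1, a2) s(b1, b2) ↔ (T.edgeSide a2 a1).ncard ≤ (T.edgeSide a1 a2).ncard ∨
      (T.edgeSide b1 b2).ncard ≤ (T.edgeSide b2 b1).ncard := by
  rw [attract_iff_exists_mem_centroid_mem_edgeSide hT ha hb hne hmid]
  constructor
  · rintro ⟨c, hc, hcX | hcZ⟩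
    · exact Or.inl (not_lt.1 fun hlt => notMem_edgeSide_of_mem_centroid hT ha hlt hc hcX)
    · exact Or.inr (not_lt.1 fun hlt => notMem_edgeSide_of_mem_centroid hT hb.symm hlt hc hcZ)
  · rintro (hle | hle)
    · obtain ⟨c, hc, hcX⟩ := exists_mem_centroid_mem_edgeSide hT ha hle
      exact ⟨c, hc, Or.inl hcX⟩
    · obtain ⟨c, hc, hcZ⟩ := exists_mem_centroid_mem_edgeSide hT hb.symm hle
      exact ⟨c, hc, Or.inr hcZ⟩

end Theta

end SimpleGraph

theorem triple_eq_iff_le_or_le {n i k x x' y z z' : ℕ} (hki : k ≤ i) (hi : i ≤ n - i)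
    (hk : k ≤ n - k) (hx : ({x, x'} : Multiset ℕ) = {n - i, i})
    (hz : ({z', z} : Multiset ℕ) = {n - k, k}) (hsum : x + y + z = n) (hy : 0 < y) (hz0 : 0 < z) :
    ({x, y, z} : Multiset ℕ) = {n - i, i - k, k} ↔ x' ≤ x ∨ z' ≤ z := by
  have hx_mem : x ∈ ({n - i, i} : Multiset ℕ) := hx ▸ by simp
  have hz_mem : z ∈ ({n - k, k} : Multiset ℕ) := hz ▸ by simp
  have hx_sum := congrArg Multiset.sum hx
  have hz_sum := congrArg Multiset.sum hz
  simp only [Multiset.insert_eq_cons, Multiset.mem_cons, Multiset.mem_singleton,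
    Multiset.sum_cons, Multiset.sum_singleton] at hx_mem hz_mem hx_sum hz_sum
  rcases (by omega : x = n - i ∧ z = k ∨ x = i ∧ z = k ∧ i < n - i) with
    ⟨hxi, hzk⟩ | ⟨hxi, hzk, hlt⟩
  · refine iff_of_true ?_ (Or.inl (by omega))
    rw [hxi, hzk, show y = i - k by omega]
  · refine iff_of_false (fun h => ?_) (by omega)
    have : n - i ∈ ({x, y, z} : Multiset ℕ) := h ▸ by simp
    simp only [Multiset.insert_eq_cons, Multiset.mem_cons, Multiset.mem_singleton] at this
    omega

/-- For distinct edges `e_a, e_b` of a tree `T` of order `n` with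
`θ_T(e_a) = (n-i, i)`, `θ_T(e_b) = (n-k, k)` and `i ≥ k` (smaller parts), we have
`θ_T({e_a, e_b}) = re(n-i, i-k, k)` if and only if `e_a` and `e_b` attract. -/
theorem theta_pair_iff_attract {V : Type*} [Fintype V] (T : SimpleGraph V)
    (hT : T.IsTree) (n : ℕ) (hn : n = Fintype.card V)
    (ea eb : Sym2 V) (hea : ea ∈ T.edgeSet) (heb : eb ∈ T.edgeSet) (hne : ea ≠ eb)
    (i k : ℕ) (hki : k ≤ i) (hi : i ≤ n - i) (hk : k ≤ n - k)
    (ha : theta T {ea} = {n - i, i}) (hb : theta T {eb} = {n - k, k}) :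
    theta T {ea, eb} = {n - i, i - k, k} ↔ Attract T ea eb := by
  obtain ⟨a1, a2, b1, b2, rfl, rfl, hmid⟩ :=
    hT.connected.preconnected.exists_reachable_deleteEdges_pair ea eb
  have hadj_a : T.Adj a1 a2 := hea
  have hadj_b : T.Adj b1 b2 := heb
  have hsum := sum_theta T {s(a1, a2), s(b1, b2)}
  rw [theta_pair hT hadj_a hadj_b hne hmid] at hsum ⊢
  rw [theta_edge hT hadj_a] at ha
  rw [theta_edge hT hadj_b] at hb
  rw [attract_iff_le_or_le hT hadj_a hadj_b hne hmid]
  refine triple_eq_iff_le_or_le hki hi hk ha hb ?_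
    ((Set.ncard_pos (Set.toFinite _)).2 ⟨a2, .rfl⟩)
    ((Set.ncard_pos (Set.toFinite _)).2 ⟨b2, T.self_mem_edgeSide b2 b1⟩)
  simpa [Multiset.insert_eq_cons, hn, add_assoc] using hsum
end

section
/- If e_a and e_b are distinct edges of a tree T with θ_T(e_a) = θ_T(e_b), then e_a and e_b repel. -/
open SimpleGraph

/-!
Orient every edge `e` away from a centroid `c` and let `F(e) = farSide T c e` be the side of
`T - e` not containing `c`. If the far side of an edge `cw` at `c` had more than half of the vertices,
then `w` would have smaller weight than `c`; as far sides shrink along paths from `c`, every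
`F(e)` has at most `n / 2` vertices. If `ea` and `eb` lie on a common path from `c`, their far
sides are strictly nested, say `F(eb) ⊂ F(ea)`. Then `|F(eb)| < |F(ea)| ≤ n - |F(ea)|`, so the
part `|F(eb)|` of `θ(eb)` is not a part of `θ(ea) = {|F(ea)|, n - |F(ea)|}`.
-/

namespace SimpleGraph

variable {V : Type*} {G : SimpleGraph V} {a b c v x y : V} {e : Sym2 V}

def farSide (G : SimpleGraph V) (c : V) (e : Sym2 V) : Set V :=
  {y | ¬ (G.deleteEdges {e}).Reachable c y}

theorem mem_farSide_iff_forall_walk : y ∈ G.farSide c e ↔ ∀ p : G.Walk c y, e ∈ p.edges := by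
  induction e using Sym2.ind with
  | h u v => exact (not_congr reachable_deleteEdges_iff_exists_walk).trans not_exists_not

theorem farSide_eq_of_reachable (h : (G.deleteEdges {e}).Reachable c y) :
    G.farSide c e = G.farSide y e := by
  ext z
  exact not_congr ⟨h.symm.trans, h.trans⟩

theorem farSide_subset_farSide (ha : a ∈ G.farSide c e) : G.farSide c s(a, b) ⊆ G.farSide c e := by
  classical
  intro y hy
  rw [mem_farSide_iff_forall_walk] at ha hy ⊢
  intro p
  have hap : a ∈ p.support := p.fst_mem_support_of_mem_edges (hy p)
  exact p.edges_takeUntil_subset_edges hap (ha (p.takeUntil a hap))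

theorem supp_connectedComponentMk_deleteEdges (y : V) :
    ((G.deleteEdges {e}).connectedComponentMk y).supp = (G.farSide y e)ᶜ := by
  ext z
  rw [ConnectedComponent.mem_supp_iff, ConnectedComponent.eq, Set.mem_compl_iff, farSide,
    Set.mem_ofPred_eq, not_not, reachable_comm]

theorem mem_theta_singleton_iff [Finite V] {k : ℕ} :
    k ∈ theta G {e} ↔ ∃ y, k + (G.farSide y e).ncard = Nat.card V := by
  simp only [theta, componentSizes, Multiset.mem_map, Finset.mem_val, Finset.mem_univ, true_and]
  constructor
  · rintro ⟨K, rfl⟩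
    induction K using ConnectedComponent.ind with
    | h y => exact ⟨y, by rw [supp_connectedComponentMk_deleteEdges, Set.ncard_compl_add_ncard]⟩
  · rintro ⟨y, hy⟩
    refine ⟨(G.deleteEdges {e}).connectedComponentMk y, ?_⟩
    rw [supp_connectedComponentMk_deleteEdges]
    have := Set.ncard_compl_add_ncard (G.farSide y e)
    omega

theorem Walk.exists_eq_append_cons_of_mem_edges {u v : V} (p : G.Walk u v) (he : e ∈ p.edges) :
    ∃ (a b : V) (q : G.Walk u a) (h : G.Adj a b) (r : G.Walk b v),
      e = s(a, b) ∧ p = q.append (cons h r) := by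
  induction p with
  | nil => simp at he
  | @cons u w _ h p ih =>
    rcases List.mem_cons.mp he with rfl | he
    · exact ⟨u, w, nil, h, p, rfl, rfl⟩
    · obtain ⟨a, b, q, h', r, rfl, rfl⟩ := ih he
      exact ⟨a, b, cons h q, h', r, rfl, rfl⟩

theorem Walk.reachable_deleteEdges_of_notMem_support {u w : V} (p : G.Walk w y)
    (hu : u ∉ p.support) : (G.deleteEdges {s(u, x)}).Reachable w y := by
  refine ⟨p.toDeleteEdges _ fun e he he' => hu ?_⟩
  rw [Set.mem_singleton_iff] at he'
  exact p.fst_mem_support_of_mem_edges (he' ▸ he)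

theorem mem_verts_deleteVerts_top_singleton :
    a ∈ ((⊤ : G.Subgraph).deleteVerts {v}).verts ↔ a ≠ v := by
  simp

theorem reachable_deleteVerts_iff (ha : a ∈ ((⊤ : G.Subgraph).deleteVerts {v}).verts)
    (hb : b ∈ ((⊤ : G.Subgraph).deleteVerts {v}).verts) :
    ((⊤ : G.Subgraph).deleteVerts {v}).coe.Reachable ⟨a, ha⟩ ⟨b, hb⟩ ↔
      ∃ p : G.Walk a b, v ∉ p.support := by
  rw [← induce_eq_coe_induce_top]
  constructor
  · rintro ⟨p⟩
    refine ⟨p.map (Embedding.induce _).toHom, fun hv => ?_⟩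
    obtain ⟨x, -, hx⟩ := List.mem_map.mp (p.support_map _ ▸ hv)
    exact x.2.2 hx
  · rintro ⟨p, hp⟩
    exact ⟨p.induce ((⊤ : G.Subgraph).verts \ {v}) fun x hx => ⟨trivial, fun h => hp (h ▸ hx)⟩⟩

namespace IsAcyclic

theorem mem_farSide_of_isPath (hG : G.IsAcyclic) {p : G.Walk c y} (hp : p.IsPath)
    (he : e ∈ p.edges) : y ∈ G.farSide c e := by
  classical
  rw [mem_farSide_iff_forall_walk]
  intro q
  have : p = q.bypass :=
    congrArg Subtype.val ((hG.subsingleton_path c y).elim ⟨p, hp⟩ ⟨_, q.bypass_isPath⟩)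
  exact q.edges_bypass_subset_edges (this ▸ he)

theorem farSide_ssubset_of_isPath_append_cons (hG : G.IsAcyclic) {q : G.Walk c a}
    {r : G.Walk b x} {h : G.Adj a b} (hp : (q.append (.cons h r)).IsPath) (he : e ∈ q.edges) :
    G.farSide c s(a, b) ⊂ G.farSide c e := by
  have hq : q.IsPath := hp.of_append_left
  have hab : s(a, b) ∉ q.edges := by
    have := hp.isTrail.edges_nodup
    rw [Walk.edges_append, Walk.edges_cons, List.nodup_append] at this
    exact fun hab => this.2.2 _ hab _ List.mem_cons_self rfl
  have ha : a ∈ G.farSide c e := hG.mem_farSide_of_isPath hq he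
  refine (Set.ssubset_iff_of_subset (farSide_subset_farSide ha)).mpr ⟨a, ha, fun ha' => ?_⟩
  exact hab (mem_farSide_iff_forall_walk.mp ha' q)

theorem farSide_ssubset_or_ssubset (hG : G.IsAcyclic) {p : G.Walk c x} (hp : p.IsPath)
    {e e' : Sym2 V} (he : e ∈ p.edges) (he' : e' ∈ p.edges) (hne : e ≠ e') :
    G.farSide c e ⊂ G.farSide c e' ∨ G.farSide c e' ⊂ G.farSide c e := by
  obtain ⟨a, b, q, h, r, rfl, rfl⟩ := p.exists_eq_append_cons_of_mem_edges he
  simp only [Walk.edges_append, Walk.edges_cons, List.mem_append, List.mem_cons] at he'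
  rcases he' with he' | he' | he'
  · exact .inl (hG.farSide_ssubset_of_isPath_append_cons hp he')
  · exact absurd he'.symm hne
  · obtain ⟨a', b', q', h', r', rfl, rfl⟩ := r.exists_eq_append_cons_of_mem_edges he'
    rw [← Walk.cons_append, Walk.append_assoc] at hp
    refine .inr (hG.farSide_ssubset_of_isPath_append_cons hp ?_)
    simp [Walk.edges_append]

end IsAcyclic

namespace IsTree

variable {T : SimpleGraph V} {u w z : V}

theorem not_reachable_deleteEdges (hT : T.IsTree) (h : T.Adj u v) :
    ¬ (T.deleteEdges {s(u, v)}).Reachable u v :=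
  isBridge_iff.mp (isAcyclic_iff_forall_adj_isBridge.mp hT.isAcyclic h)

theorem mem_farSide_iff_exists_walk (hT : T.IsTree) (h : T.Adj v z) :
    y ∈ T.farSide v s(v, z) ↔ ∃ p : T.Walk z y, v ∉ p.support := by
  classical
  constructor
  · intro hy
    obtain ⟨p, hp⟩ := (hT.connected.preconnected v y).some.toPath
    have hvz := mem_farSide_iff_forall_walk.mp hy p
    cases p with
    | nil => simp at hvz
    | @cons _ w _ h' p =>
      have hv := ((Walk.cons_isPath_iff h' p).mp hp).2
      have hvz' : s(v, z) ∉ p.edges := fun he => hv (p.fst_mem_support_of_mem_edges he)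
      obtain rfl : z = w := Sym2.congr_right.mp ((List.mem_cons.mp hvz).resolve_right hvz')
      exact ⟨p, hv⟩
  · rintro ⟨p, hp⟩ hvy
    exact hT.not_reachable_deleteEdges h
      (hvy.trans (p.reachable_deleteEdges_of_notMem_support hp).symm)

theorem reachable_deleteEdges_or (hT : T.IsTree) (h : T.Adj u v) (y : V) :
    (T.deleteEdges {s(u, v)}).Reachable u y ∨ (T.deleteEdges {s(u, v)}).Reachable v y := by
  refine or_iff_not_imp_left.mpr fun hy => ?_
  obtain ⟨p, hp⟩ := (hT.mem_farSide_iff_exists_walk h).mp hy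
  exact p.reachable_deleteEdges_of_notMem_support hp

theorem farSide_swap (hT : T.IsTree) (h : T.Adj u v) :
    T.farSide v s(u, v) = (T.farSide u s(u, v))ᶜ := by
  ext y
  simp only [farSide, Set.mem_compl_iff, Set.mem_ofPred_eq, not_not]
  refine ⟨(hT.reachable_deleteEdges_or h y).resolve_right, fun huy hvy => ?_⟩
  exact hT.not_reachable_deleteEdges h (huy.trans hvy.symm)

theorem image_supp_eq_farSide (hT : T.IsTree) (h : T.Adj v z) :
    Subtype.val '' (((⊤ : T.Subgraph).deleteVerts {v}).coe.connectedComponentMk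
      ⟨z, mem_verts_deleteVerts_top_singleton.mpr h.ne.symm⟩).supp = T.farSide v s(v, z) := by
  ext y
  rw [hT.mem_farSide_iff_exists_walk h]
  constructor
  · rintro ⟨⟨y, hy⟩, hyz, rfl⟩
    rw [ConnectedComponent.mem_supp_iff, ConnectedComponent.eq, reachable_deleteVerts_iff] at hyz
    obtain ⟨p, hp⟩ := hyz
    exact ⟨p.reverse, by rwa [Walk.support_reverse, List.mem_reverse]⟩
  · rintro ⟨p, hp⟩
    refine ⟨⟨y, mem_verts_deleteVerts_top_singleton.mpr fun hyv => hp (hyv ▸ p.end_mem_support)⟩,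
      ?_, rfl⟩
    rw [ConnectedComponent.mem_supp_iff, ConnectedComponent.eq, reachable_deleteVerts_iff]
    exact ⟨p.reverse, by rwa [Walk.support_reverse, List.mem_reverse]⟩

theorem exists_adj_eq_connectedComponentMk (hT : T.IsTree)
    (K : ((⊤ : T.Subgraph).deleteVerts {v}).coe.ConnectedComponent) :
    ∃ z, ∃ h : T.Adj v z, K = ((⊤ : T.Subgraph).deleteVerts {v}).coe.connectedComponentMk
      ⟨z, mem_verts_deleteVerts_top_singleton.mpr h.ne.symm⟩ := by
  classical
  induction K using ConnectedComponent.ind with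
  | h y =>
    obtain ⟨y, hy⟩ := y
    obtain ⟨p, hp⟩ := (hT.connected.preconnected v y).some.toPath
    cases p with
    | nil => exact absurd rfl (mem_verts_deleteVerts_top_singleton.mp hy)
    | @cons _ z _ h p =>
      refine ⟨z, h, ConnectedComponent.sound ?_⟩
      rw [reachable_deleteVerts_iff]
      refine ⟨p.reverse, ?_⟩
      rw [Walk.support_reverse, List.mem_reverse]
      exact ((Walk.cons_isPath_iff h p).mp hp).2

variable [Finite V]

theorem ncard_farSide_eq_or (hT : T.IsTree) (h : T.Adj u v) (y : V) :
    (T.farSide y s(u, v)).ncard = (T.farSide u s(u, v)).ncard ∨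
      (T.farSide y s(u, v)).ncard + (T.farSide u s(u, v)).ncard = Nat.card V := by
  rcases hT.reachable_deleteEdges_or h y with hy | hy
  · exact .inl (by rw [farSide_eq_of_reachable hy])
  · right
    rw [← farSide_eq_of_reachable hy, hT.farSide_swap h, Set.ncard_compl_add_ncard]

theorem mem_theta_singleton_iff (hT : T.IsTree) (he : e ∈ T.edgeSet) (c : V) {k : ℕ} :
    k ∈ theta T {e} ↔ k = (T.farSide c e).ncard ∨ k + (T.farSide c e).ncard = Nat.card V := by
  induction e using Sym2.ind with
  | h u v =>
    rw [mem_edgeSet] at he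
    have hswap : (T.farSide v s(u, v)).ncard + (T.farSide u s(u, v)).ncard = Nat.card V := by
      rw [hT.farSide_swap he, Set.ncard_compl_add_ncard]
    have hc := hT.ncard_farSide_eq_or he c
    rw [SimpleGraph.mem_theta_singleton_iff]
    constructor
    · rintro ⟨y, hy⟩
      have := hT.ncard_farSide_eq_or he y
      omega
    · rintro (rfl | hk)
      · rcases hc with hc | hc
        exacts [⟨v, by omega⟩, ⟨u, by omega⟩]
      · exact ⟨c, hk⟩

theorem weight_eq (hT : T.IsTree) (v : V) :
    weight T v = sSup ((fun z => (T.farSide v s(v, z)).ncard) '' T.neighborSet v) := by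
  unfold weight
  congr 1
  ext k
  simp only [Set.mem_range, Set.mem_image, mem_neighborSet]
  constructor
  · rintro ⟨K, rfl⟩
    obtain ⟨z, h, rfl⟩ := hT.exists_adj_eq_connectedComponentMk K
    exact ⟨z, h, by rw [← hT.image_supp_eq_farSide h,
      Set.ncard_image_of_injective _ Subtype.val_injective]⟩
  · rintro ⟨z, h, rfl⟩
    exact ⟨_, by rw [← hT.image_supp_eq_farSide h,
      Set.ncard_image_of_injective _ Subtype.val_injective]⟩

theorem ncard_farSide_le_weight (hT : T.IsTree) (h : T.Adj v z) :
    (T.farSide v s(v, z)).ncard ≤ weight T v := by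
  rw [hT.weight_eq]
  exact le_csSup (Set.toFinite _).bddAbove ⟨z, h, rfl⟩

theorem weight_le (hT : T.IsTree) {m : ℕ}
    (hm : ∀ z, T.Adj v z → (T.farSide v s(v, z)).ncard ≤ m) : weight T v ≤ m := by
  rw [hT.weight_eq]
  exact csSup_le' (by rintro _ ⟨z, h, rfl⟩; exact hm z h)

theorem two_mul_ncard_farSide_le_of_adj (hT : T.IsTree) (hc : c ∈ centroid T) (h : T.Adj c w) :
    2 * (T.farSide c s(c, w)).ncard ≤ Nat.card V := by
  by_contra! hlt
  have hw : weight T w ≤ (T.farSide c s(c, w)).ncard - 1 := by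
    refine hT.weight_le fun z hz => ?_
    by_cases hzc : z = c
    · subst hzc
      have := Set.ncard_compl_add_ncard (T.farSide z s(z, w))
      rw [Sym2.eq_swap, hT.farSide_swap h]
      omega
    · have hcw : (T.deleteEdges {s(w, z)}).Reachable c w := by
        refine Adj.reachable (deleteEdges_adj.mpr ⟨h, ?_⟩)
        simp [h.ne, Ne.symm hzc]
      have hpath : ((Walk.cons h .nil).append (.cons hz .nil)).IsPath := by
        simp [Walk.cons_isPath_iff, h.ne, hz.ne, Ne.symm hzc]
      have := Set.ncard_lt_ncard (hT.isAcyclic.farSide_ssubset_of_isPath_append_cons hpath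
        (e := s(c, w)) (by simp))
      rw [← farSide_eq_of_reachable hcw]
      omega
  have := hc w
  have := hT.ncard_farSide_le_weight h
  omega

theorem two_mul_ncard_farSide_le (hT : T.IsTree) (hc : c ∈ centroid T) {p : T.Walk c y}
    (hp : p.IsPath) (he : e ∈ p.edges) : 2 * (T.farSide c e).ncard ≤ Nat.card V := by
  cases p with
  | nil => simp at he
  | @cons _ w _ h p =>
    have hsub : T.farSide c e ⊆ T.farSide c s(c, w) := by
      rcases List.mem_cons.mp he with rfl | he
      · rfl
      · obtain ⟨a, b, q, h', r, rfl, rfl⟩ := p.exists_eq_append_cons_of_mem_edges he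
        rw [← Walk.cons_append] at hp
        exact (hT.isAcyclic.farSide_ssubset_of_isPath_append_cons hp (by simp)).subset
    have := Set.ncard_le_ncard hsub
    have := hT.two_mul_ncard_farSide_le_of_adj hc h
    omega

theorem theta_ne_of_farSide_ssubset (hT : T.IsTree) {e' : Sym2 V} (he : e ∈ T.edgeSet)
    (he' : e' ∈ T.edgeSet) (hbound : 2 * (T.farSide c e).ncard ≤ Nat.card V)
    (hss : T.farSide c e' ⊂ T.farSide c e) : theta T {e} ≠ theta T {e'} := by
  intro h
  have hmem : (T.farSide c e').ncard ∈ theta T {e} :=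
    h ▸ (hT.mem_theta_singleton_iff he' c).mpr (.inl rfl)
  have := Set.ncard_lt_ncard hss
  rcases (hT.mem_theta_singleton_iff he c).mp hmem with h' | h' <;> omega

end IsTree

end SimpleGraph

theorem repel_of_theta_eq_general {V : Type*} [Fintype V] (T : SimpleGraph V) (hT : T.IsTree)
    (ea eb : Sym2 V) (hne : ea ≠ eb)
    (h : theta T {ea} = theta T {eb}) : ¬ Attract T ea eb := by
  rintro ⟨c, x, p, hc, hp, ha, hb⟩
  have hea := p.edges_subset_edgeSet ha
  have heb := p.edges_subset_edgeSet hb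
  rcases hT.isAcyclic.farSide_ssubset_or_ssubset hp ha hb hne with hss | hss
  · exact hT.theta_ne_of_farSide_ssubset heb hea (hT.two_mul_ncard_farSide_le hc hp hb) hss h.symm
  · exact hT.theta_ne_of_farSide_ssubset hea heb (hT.two_mul_ncard_farSide_le hc hp ha) hss h

/-- If distinct edges of a tree have the same `θ_T`-image, then they repel. -/
theorem repel_of_theta_eq {V : Type*} [Fintype V] (T : SimpleGraph V) (hT : T.IsTree)
    (ea eb : Sym2 V) (hea : ea ∈ T.edgeSet) (heb : eb ∈ T.edgeSet) (hne : ea ≠ eb)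
    (h : theta T {ea} = theta T {eb}) : ¬ Attract T ea eb :=
  repel_of_theta_eq_general T hT ea eb hne h
end
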